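/- arXiv:1703.01761 — 10 statements merged into one kernel-verified Lean document; each statement's English description precedes it below -/
import Mathlib

section
/- Let S be a numerical semigroup with multiplicity m, q = ⌈c/m⌉, ρ = qm − c, and S_j = S ∩ [jm−ρ, (j+1)m−ρ). Then for all i, j ≥ 2, S_i + S_j ⊆ S_{i+j−1} ∪ S_{i+j} ∪ S_{i+j+1}, and for all j ≥ 1, S_1 + S_j ⊆ S_{1+j} ∪ S_{j+2}. -/
open Pointwise

/-- Weak grading: `S_i + S_j ⊆ S_{i+j−1} ∪ S_{i+j} ∪ S_{i+j+1}` for `i, j ≥ 2`,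
and `S_1 + S_j ⊆ S_{1+j} ∪ S_{j+2}` for `j ≥ 1`. -/
theorem weak_grading (S : Set ℕ) (m c q ρ : ℕ)
    (hS0 : 0 ∈ S) (hSadd : ∀ a ∈ S, ∀ b ∈ S, a + b ∈ S)
    (hSfin : (Sᶜ : Set ℕ).Finite)
    (hm : m = sInf {n : ℕ | n ∈ S ∧ n ≠ 0})
    (hc : c = sSup (Sᶜ : Set ℕ) + 1)
    (hq : c + ρ = q * m) (hρ : ρ < m)
    (Sj : ℕ → Set ℕ)
    (hSj : ∀ j, Sj j = S ∩ Set.Ico (j * m - ρ) ((j + 1) * m - ρ)) :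
    (∀ i j, 2 ≤ i → 2 ≤ j →
      Sj i + Sj j ⊆ Sj (i + j - 1) ∪ Sj (i + j) ∪ Sj (i + j + 1)) ∧
    (∀ j, 1 ≤ j → Sj 1 + Sj j ⊆ Sj (1 + j) ∪ Sj (j + 2)) := by
  constructor
  · intro i j hi hj z hz
    rw [Set.mem_add] at hz
    obtain ⟨x, hx, y, hy, rfl⟩ := hz
    rw [hSj] at hx hy
    simp only [hSj, Set.mem_union, Set.mem_inter_iff, Set.mem_Ico]
    have hxy : x + y ∈ S := hSadd _ hx.1 _ hy.1
    obtain ⟨hx1, hx2⟩ := hx.2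
    obtain ⟨hy1, hy2⟩ := hy.2
    have e1 : (i + 1) * m = i * m + m := by ring
    have e2 : (j + 1) * m = j * m + m := by ring
    have e3 : (i + j) * m = i * m + j * m := by ring
    have e4 : (i + j - 1) * m + m = i * m + j * m := by
      have h : i + j - 1 + 1 = i + j := by omega
      calc (i + j - 1) * m + m = (i + j - 1 + 1) * m := by ring
        _ = i * m + j * m := by rw [h]; ring
    have e5 : (i + j + 1) * m = i * m + j * m + m := by ring
    have e6 : (i + j + 1 + 1) * m = i * m + j * m + m + m := by ring
    have e7 : (i + j - 1 + 1) * m = i * m + j * m := by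
      rw [show i + j - 1 + 1 = i + j from by omega]; ring
    have hA2 : 2 * m ≤ i * m := Nat.mul_le_mul_right m hi
    have hB2 : 2 * m ≤ j * m := Nat.mul_le_mul_right m hj
    rw [e1] at hx2
    rw [e2] at hy2
    rw [e7, e3, e5, e6]
    generalize hP : (i + j - 1) * m = P at e4 ⊢
    generalize hA : i * m = A at hx1 hx2 hA2 e4 ⊢
    generalize hB : j * m = B at hy1 hy2 hB2 e4 ⊢
    rcases lt_or_ge (x + y) (A + B - ρ) with h1 | h1
    · refine Or.inl (Or.inl ⟨hxy, ?_, ?_⟩) <;> omega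
    rcases lt_or_ge (x + y) (A + B + m - ρ) with h2 | h2
    · refine Or.inl (Or.inr ⟨hxy, ?_, ?_⟩) <;> omega
    · refine Or.inr ⟨hxy, ?_, ?_⟩ <;> omega
  · intro j hj z hz
    rw [Set.mem_add] at hz
    obtain ⟨x, hx, y, hy, rfl⟩ := hz
    rw [hSj] at hx hy
    simp only [hSj, Set.mem_union, Set.mem_inter_iff, Set.mem_Ico]
    have hxy : x + y ∈ S := hSadd _ hx.1 _ hy.1
    obtain ⟨hx1, hx2⟩ := hx.2
    obtain ⟨hy1, hy2⟩ := hy.2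
    rw [one_mul] at hx1
    have hxm : m ≤ x := by
      have hx0 : x ≠ 0 := by omega
      have hmem : x ∈ {n : ℕ | n ∈ S ∧ n ≠ 0} := ⟨hx.1, hx0⟩
      rw [hm]; exact Nat.sInf_le hmem
    have e1 : (1 + 1) * m = m + m := by ring
    have e2 : (j + 1) * m = j * m + m := by ring
    have e3 : (1 + j) * m = m + j * m := by ring
    have e4 : (1 + j + 1) * m = m + j * m + m := by ring
    have e5 : (j + 2) * m = j * m + m + m := by ring
    have e6 : (j + 2 + 1) * m = j * m + m + m + m := by ring
    have hB1 : 1 * m ≤ j * m := Nat.mul_le_mul_right m hj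
    rw [one_mul] at hB1
    rw [e1] at hx2
    rw [e2] at hy2
    rw [e3, e4, e5, e6]
    generalize hB : j * m = B at hy1 hy2 hB1 ⊢
    rcases lt_or_ge (x + y) (m + B + m - ρ) with h1 | h1
    · refine Or.inl ⟨hxy, ?_, ?_⟩ <;> omega
    · refine Or.inr ⟨hxy, ?_, ?_⟩ <;> omega
end

section
/- Let S be a numerical semigroup with multiplicity m, conductor c, q = ⌈c/m⌉, ρ = qm − c, and S_j = S ∩ [jm−ρ, (j+1)m−ρ). Then for all i, j ≥ 1: |(S_i + S_j) ∩ S_{i+j−1}| ≤ ρ and |(S_i + S_j) ∩ S_{i+j+1}| ≤ m − ρ − 1. -/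
open Pointwise

lemma ncard_Ico_aux (a b : ℕ) : (Set.Ico a b).ncard = b - a := by
  rw [← Finset.coe_Ico, Set.ncard_coe_finset, Nat.card_Ico]

/-- `|(S_i + S_j) ∩ S_{i+j−1}| ≤ ρ` and `|(S_i + S_j) ∩ S_{i+j+1}| ≤ m − ρ − 1`
for all `i, j ≥ 1`. -/
theorem intersections_bound (S : Set ℕ) (m c q ρ : ℕ)
    (hS0 : 0 ∈ S) (hSadd : ∀ a ∈ S, ∀ b ∈ S, a + b ∈ S)
    (hSfin : (Sᶜ : Set ℕ).Finite)
    (hm : m = sInf {n : ℕ | n ∈ S ∧ n ≠ 0})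
    (hc : c = sSup (Sᶜ : Set ℕ) + 1)
    (hq : c + ρ = q * m) (hρ : ρ < m)
    (Sj : ℕ → Set ℕ)
    (hSj : ∀ j, Sj j = S ∩ Set.Ico (j * m - ρ) ((j + 1) * m - ρ)) :
    ∀ i j, 1 ≤ i → 1 ≤ j →
      ((Sj i + Sj j) ∩ Sj (i + j - 1)).ncard ≤ ρ ∧
      ((Sj i + Sj j) ∩ Sj (i + j + 1)).ncard ≤ m - ρ - 1 := by
  intro i j hi hj
  have him : 1 * m ≤ i * m := Nat.mul_le_mul_right m hi
  have hjm : 1 * m ≤ j * m := Nat.mul_le_mul_right m hj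
  simp only [one_mul] at him hjm
  constructor
  · have hsub : (Sj i + Sj j) ∩ Sj (i + j - 1) ⊆
        Set.Ico ((i + j) * m - 2 * ρ) ((i + j) * m - ρ) := by
      rintro x ⟨hx1, hx2⟩
      rcases Set.mem_add.mp hx1 with ⟨a, ha, b, hb, rfl⟩
      rw [hSj] at ha hb hx2
      obtain ⟨-, ha2, -⟩ := ha
      obtain ⟨-, hb2, -⟩ := hb
      obtain ⟨-, -, hx3⟩ := hx2
      have h1 : i + j - 1 + 1 = i + j := by omega
      rw [h1] at hx3
      constructor
      · have : i * m - ρ + (j * m - ρ) ≤ a + b := Nat.add_le_add ha2 hb2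
        have h2 : i * m - ρ + (j * m - ρ) = (i + j) * m - 2 * ρ := by
          rw [Nat.add_mul]; omega
        omega
      · exact hx3
    calc ((Sj i + Sj j) ∩ Sj (i + j - 1)).ncard
        ≤ (Set.Ico ((i + j) * m - 2 * ρ) ((i + j) * m - ρ)).ncard :=
          Set.ncard_le_ncard hsub (Set.finite_Ico _ _)
      _ = ρ := by
          rw [ncard_Ico_aux]
          have : 2 * m ≤ (i + j) * m := by
            calc 2 * m = m + m := by ring
            _ ≤ i * m + j * m := Nat.add_le_add him hjm
            _ = (i + j) * m := (Nat.add_mul i j m).symm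
          omega
  · have hsub : (Sj i + Sj j) ∩ Sj (i + j + 1) ⊆
        Set.Ico ((i + j + 1) * m - ρ) ((i + j + 2) * m - 2 * ρ - 1) := by
      rintro x ⟨hx1, hx2⟩
      rcases Set.mem_add.mp hx1 with ⟨a, ha, b, hb, rfl⟩
      rw [hSj] at ha hb hx2
      obtain ⟨-, -, ha3⟩ := ha
      obtain ⟨-, -, hb3⟩ := hb
      obtain ⟨-, hx2, -⟩ := hx2
      refine ⟨hx2, ?_⟩
      have hia : a < (i + 1) * m - ρ := ha3
      have hjb : b < (j + 1) * m - ρ := hb3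
      have h1 : ρ < (i + 1) * m := by
        have : m ≤ (i + 1) * m := Nat.le_mul_of_pos_left m (by omega)
        omega
      have h2 : ρ < (j + 1) * m := by
        have : m ≤ (j + 1) * m := Nat.le_mul_of_pos_left m (by omega)
        omega
      have h3 : (i + 1) * m + (j + 1) * m = (i + j + 2) * m := by ring
      omega
    calc ((Sj i + Sj j) ∩ Sj (i + j + 1)).ncard
        ≤ (Set.Ico ((i + j + 1) * m - ρ) ((i + j + 2) * m - 2 * ρ - 1)).ncard :=
          Set.ncard_le_ncard hsub (Set.finite_Ico _ _)
      _ ≤ m - ρ - 1 := by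
          rw [ncard_Ico_aux]
          have h3 : (i + j + 2) * m = (i + j + 1) * m + m := by ring
          have : ρ ≤ (i + j + 1) * m := by
            have : m ≤ (i + j + 1) * m := Nat.le_mul_of_pos_left m (by omega)
            omega
          omega
end

section
/- Let S be a numerical semigroup with conductor c, q = ⌈c/m⌉, ρ = qm−c, L = S ∩ [0,c), and S_j = S ∩ [jm−ρ, (j+1)m−ρ). Then L is the disjoint union of S_0, S_1, …, S_{q−1}, and |L| = 1 + |S_1| + ⋯ + |S_{q−1}|. -/
private lemma ncard_biUnion_aux (t : Finset ℕ) (f : ℕ → Set ℕ) (hfin : ∀ i, (f i).Finite) :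
    (∀ i ∈ t, ∀ j ∈ t, i ≠ j → Disjoint (f i) (f j)) →
    (⋃ i ∈ t, f i).ncard = ∑ i ∈ t, (f i).ncard := by
  induction t using Finset.induction_on with
  | empty => simp
  | @insert a s ha ih =>
    intro hd
    have hdisj : Disjoint (f a) (⋃ i ∈ s, f i) := by
      simp only [Set.disjoint_iUnion_right]
      intro i hi
      exact hd a (Finset.mem_insert_self a s) i (Finset.mem_insert_of_mem hi)
        (by rintro rfl; exact ha hi)
    have hfin2 : (⋃ i ∈ s, f i).Finite := by
      apply Set.Finite.biUnion s.finite_toSet (fun i _ => hfin i)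
    rw [Finset.set_biUnion_insert, Finset.sum_insert ha,
      Set.ncard_union_eq hdisj (hfin a) hfin2,
      ih (fun i hi j hj => hd i (Finset.mem_insert_of_mem hi) j (Finset.mem_insert_of_mem hj))]

/-- `L = S ∩ [0,c)` is the disjoint union of `S_0, …, S_{q−1}`, and
`|L| = 1 + |S_1| + ⋯ + |S_{q−1}|`. -/
theorem L_partition (S : Set ℕ) (m c q ρ : ℕ)
    (hS0 : 0 ∈ S) (hSadd : ∀ a ∈ S, ∀ b ∈ S, a + b ∈ S)
    (hSfin : (Sᶜ : Set ℕ).Finite)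
    (hm : m = sInf {n : ℕ | n ∈ S ∧ n ≠ 0})
    (hc : c = sSup (Sᶜ : Set ℕ) + 1)
    (hq : c + ρ = q * m) (hρ : ρ < m)
    (Sj : ℕ → Set ℕ)
    (hSj : ∀ j, Sj j = S ∩ Set.Ico (j * m - ρ) ((j + 1) * m - ρ))
    (L : Set ℕ) (hL : L = S ∩ Set.Ico 0 c) :
    (L = ⋃ j ∈ Finset.range q, Sj j) ∧
    (∀ i ∈ Finset.range q, ∀ j ∈ Finset.range q, i ≠ j → Disjoint (Sj i) (Sj j)) ∧
    L.ncard = 1 + ∑ j ∈ Finset.Ico 1 q, (Sj j).ncard := by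
  have hc1 : 1 ≤ c := by omega
  have hm1 : 0 < m := by
    rcases Nat.eq_zero_or_pos m with h | h
    · subst h; simp at hq; omega
    · exact h
  have hq1 : 0 < q := by
    rcases Nat.eq_zero_or_pos q with h | h
    · subst h; simp at hq; omega
    · exact h
  have hunion : L = ⋃ j ∈ Finset.range q, Sj j := by
    ext x
    simp only [hL, hSj, Set.mem_iUnion, Finset.mem_range, Set.mem_inter_iff,
      Set.mem_Ico, exists_prop]
    constructor
    · rintro ⟨hxS, -, hxc⟩
      obtain ⟨j, r, hr, hdm⟩ : ∃ j r, r < m ∧ m * j + r = x + ρ :=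
        ⟨(x + ρ) / m, (x + ρ) % m, Nat.mod_lt _ hm1, Nat.div_add_mod _ _⟩
      have hjq : j < q := by
        by_contra h
        push_neg at h
        have h1 : q * m ≤ j * m := Nat.mul_le_mul_right m h
        have h2 : x + ρ < q * m := by rw [← hq]; exact Nat.add_lt_add_right hxc ρ
        have : x + ρ < x + ρ := by
          calc x + ρ < q * m := h2
            _ ≤ j * m := h1
            _ = m * j := Nat.mul_comm _ _
            _ ≤ m * j + r := Nat.le_add_right _ _
            _ = x + ρ := hdm
        exact absurd this (lt_irrefl _)
      refine ⟨j, hjq, hxS, ?_, ?_⟩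
      · rw [Nat.sub_le_iff_le_add, Nat.mul_comm, ← hdm]
        exact Nat.le_add_right _ _
      · rw [Nat.lt_sub_iff_add_lt, add_one_mul, Nat.mul_comm j m, ← hdm]
        exact Nat.add_lt_add_left hr _
    · rintro ⟨j, hj, hxS, h1, h2⟩
      have h3 : (j + 1) * m ≤ q * m := Nat.mul_le_mul_right m (by omega)
      have h5 : q * m - ρ = c := by rw [← hq]; omega
      refine ⟨hxS, Nat.zero_le x, ?_⟩
      rw [← h5]
      exact lt_of_lt_of_le h2 (Nat.sub_le_sub_right h3 ρ)
  have hdisj : ∀ i j : ℕ, i < j → Disjoint (Sj i) (Sj j) := by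
    intro i j hij
    rw [hSj i, hSj j, Set.disjoint_left]
    rintro x ⟨-, -, h2⟩ ⟨-, h3, -⟩
    have h4 : (i + 1) * m ≤ j * m := Nat.mul_le_mul_right m (by omega)
    exact absurd (h2.trans_le ((Nat.sub_le_sub_right h4 ρ).trans h3)) (lt_irrefl x)
  have hdisj2 : ∀ i ∈ Finset.range q, ∀ j ∈ Finset.range q, i ≠ j →
      Disjoint (Sj i) (Sj j) := by
    intro i _ j _ hne
    rcases Nat.lt_or_ge i j with h | h
    · exact hdisj i j h
    · exact (hdisj j i (by omega)).symm
  refine ⟨hunion, hdisj2, ?_⟩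
  have hfin : ∀ j, (Sj j).Finite := fun j => by
    rw [hSj]; exact (Set.finite_Ico _ _).inter_of_right _
  have hS00 : Sj 0 = {0} := by
    rw [hSj]
    ext x
    simp only [Set.mem_inter_iff, Set.mem_Ico, Set.mem_singleton_iff, Nat.zero_mul,
      Nat.one_mul, Nat.zero_add, Nat.zero_sub]
    constructor
    · rintro ⟨hxS, -, hx⟩
      by_contra hne
      have hmx : m ≤ x := hm ▸ Nat.sInf_le ⟨hxS, hne⟩
      omega
    · rintro rfl; exact ⟨hS0, by omega⟩
  rw [hunion, ncard_biUnion_aux _ _ hfin hdisj2, Finset.range_eq_Ico,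
    Finset.sum_eq_sum_Ico_succ_bot hq1, hS00, Set.ncard_singleton]
end

section
/- Let S be a numerical semigroup with multiplicity m, conductor c, q = ⌈c/m⌉, ρ = qm−c, L = S ∩ [0,c). Let X be the Apéry set of S with respect to m, X_i = X ∩ [im−ρ,(i+1)m−ρ), α_i = |X_i|. Then |L| = Σ_{i=0}^{q−1} (q−i)·α_i. -/
/-- `|L| = Σ_{i=0}^{q−1} (q−i)·α_i`, where `α_i = |X_i|` counts Apéry elements
in the `i`-th level. -/
theorem L_formula (S : Set ℕ) (m c q ρ : ℕ)
    (hS0 : 0 ∈ S) (hSadd : ∀ a ∈ S, ∀ b ∈ S, a + b ∈ S)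
    (hSfin : (Sᶜ : Set ℕ).Finite)
    (hm : m = sInf {n : ℕ | n ∈ S ∧ n ≠ 0})
    (hc : c = sSup (Sᶜ : Set ℕ) + 1)
    (hq : c + ρ = q * m) (hρ : ρ < m)
    (X : Set ℕ) (hX : X = {x : ℕ | x ∈ S ∧ ¬ ∃ y ∈ S, x = y + m})
    (Xj : ℕ → Set ℕ)
    (hXj : ∀ j, Xj j = X ∩ Set.Ico (j * m - ρ) ((j + 1) * m - ρ))
    (L : Set ℕ) (hL : L = S ∩ Set.Ico 0 c) :
    L.ncard = ∑ i ∈ Finset.range q, (q - i) * (Xj i).ncard := by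
  classical
  have hm0 : 0 < m := by omega
  -- m ∈ S
  have hmS : m ∈ S := by
    have hne : {n : ℕ | n ∈ S ∧ n ≠ 0}.Nonempty := by
      have hinf : (Sᶜ ∪ {0} : Set ℕ).Finite := hSfin.union (Set.finite_singleton 0)
      obtain ⟨n, hn⟩ := hinf.infinite_compl.nonempty
      simp only [Set.compl_union, Set.mem_inter_iff, Set.mem_compl_iff,
        Set.mem_singleton_iff] at hn
      exact ⟨n, by simpa using hn.1, hn.2⟩
    have := Nat.sInf_mem hne
    rw [← hm] at this
    exact this.1
  have hXS : ∀ x ∈ X, x ∈ S := by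
    intro x hx; rw [hX] at hx; exact hx.1
  -- closure under adding multiples of m
  have hmul : ∀ x ∈ S, ∀ k : ℕ, x + k * m ∈ S := by
    intro x hx k
    induction k with
    | zero => simpa using hx
    | succ k ih =>
      have : x + k * m + m ∈ S := hSadd _ ih _ hmS
      have he : x + (k + 1) * m = x + k * m + m := by ring
      rw [he]; exact this
  -- decomposition
  have hdecomp : ∀ s, s ∈ S → ∃ x k, x ∈ X ∧ s = x + k * m := by
    intro s
    induction s using Nat.strong_induction_on with
    | _ s ih =>
      intro hs
      by_cases hcase : ∃ y ∈ S, s = y + m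
      · obtain ⟨y, hy, rfl⟩ := hcase
        obtain ⟨x, k, hxX, hyx⟩ := ih y (by omega) hy
        exact ⟨x, k + 1, hxX, by rw [hyx]; ring⟩
      · exact ⟨s, 0, by rw [hX]; exact ⟨hs, hcase⟩, by simp⟩
  -- x ∈ X cannot be y + (d+1)m with y ∈ S
  have haux : ∀ x ∈ X, ∀ y ∈ S, ∀ d : ℕ, x ≠ y + (d + 1) * m := by
    intro x hx y hy d he
    rw [hX] at hx
    exact hx.2 ⟨y + d * m, hmul y hy d, by rw [he]; ring⟩
  -- uniqueness of decomposition
  have huniq : ∀ x ∈ X, ∀ x' ∈ X, ∀ k k' : ℕ,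
      x + k * m = x' + k' * m → x = x' ∧ k = k' := by
    intro x hx x' hx' k k' heq
    rcases Nat.lt_trichotomy k k' with h | h | h
    · exfalso
      obtain ⟨d, hd⟩ : ∃ d, k' = k + d + 1 := ⟨k' - k - 1, by omega⟩
      have h2 : (x' + (d + 1) * m) + k * m = x' + k' * m := by rw [hd]; ring
      have h3 : x = x' + (d + 1) * m := by
        have := heq.trans h2.symm
        omega
      exact haux x hx x' (hXS x' hx') d h3
    · subst h
      exact ⟨by omega, rfl⟩
    · exfalso
      obtain ⟨d, hd⟩ : ∃ d, k = k' + d + 1 := ⟨k - k' - 1, by omega⟩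
      have h2 : (x + (d + 1) * m) + k' * m = x + k * m := by rw [hd]; ring
      have h3 : x' = x + (d + 1) * m := by
        have := heq.symm.trans h2.symm
        omega
      exact haux x' hx' x (hXS x hx) d h3
  -- finset versions
  set Xf : ℕ → Finset ℕ :=
    fun i => (Finset.Ico (i * m - ρ) ((i + 1) * m - ρ)).filter (· ∈ X) with hXf
  have hXfcoe : ∀ i, Xj i = ↑(Xf i) := by
    intro i
    ext x
    simp only [hXj i, hXf, Finset.coe_filter, Set.mem_inter_iff, Set.mem_Ico,
      Finset.mem_Ico, Set.mem_setOf_eq]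
    tauto
  set Lf : Finset ℕ := (Finset.range c).filter (· ∈ S) with hLf
  have hLcoe : L = ↑Lf := by
    ext x
    simp only [hL, hLf, Finset.coe_filter, Set.mem_inter_iff, Set.mem_Ico,
      Finset.mem_range, Set.mem_setOf_eq]
    constructor
    · rintro ⟨h1, _, h2⟩; exact ⟨h2, h1⟩
    · rintro ⟨h1, h2⟩; exact ⟨h2, Nat.zero_le _, h1⟩
  rw [hLcoe, Set.ncard_coe_finset]
  have hXjc : ∀ i, (Xj i).ncard = (Xf i).card := by
    intro i; rw [hXfcoe i, Set.ncard_coe_finset]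
  simp only [hXjc]
  -- the sigma set
  set T : Finset ((_ : ℕ) × ℕ × ℕ) :=
    (Finset.range q).sigma (fun i => Xf i ×ˢ Finset.range (q - i)) with hT
  have key : T.card = Lf.card := by
    apply Finset.card_bij (fun a _ => a.2.1 + a.2.2 * m)
    · -- maps into Lf
      rintro ⟨i, x, k⟩ ha
      simp only [hT, Finset.mem_sigma, Finset.mem_product, hXf, Finset.mem_filter,
        Finset.mem_Ico, Finset.mem_range] at ha
      obtain ⟨hi, ⟨⟨hx1, hx2⟩, hxX⟩, hk⟩ := ha
      have hmemS : x + k * m ∈ S := hmul x (hXS x hxX) k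
      have h1 : x + ρ < (i + 1) * m := by
        have hρle : ρ ≤ (i + 1) * m := le_trans hρ.le (Nat.le_mul_of_pos_left m (by omega))
        omega
      have h2 : (i + 1 + k) * m ≤ q * m := Nat.mul_le_mul_right m (by omega)
      have h3 : x + k * m + ρ < c + ρ := by
        calc x + k * m + ρ = (x + ρ) + k * m := by ring
        _ < (i + 1) * m + k * m := Nat.add_lt_add_right h1 _
        _ = (i + 1 + k) * m := by ring
        _ ≤ q * m := h2
        _ = c + ρ := hq.symm
      have hlt : x + k * m < c := Nat.lt_of_add_lt_add_right h3
      rw [hLf, Finset.mem_filter, Finset.mem_range]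
      exact ⟨hlt, hmemS⟩
    · -- injective
      rintro ⟨i, x, k⟩ ha ⟨i', x', k'⟩ ha' heq
      simp only [hT, Finset.mem_sigma, Finset.mem_product, hXf, Finset.mem_filter,
        Finset.mem_Ico, Finset.mem_range] at ha ha'
      obtain ⟨hi, ⟨hxi1, hxi2⟩, hk⟩ := ha
      obtain ⟨hi', ⟨hxi1', hxi2'⟩, hk'⟩ := ha'
      obtain ⟨hxx, hkk⟩ := huniq x hxi2 x' hxi2' k k' heq
      subst hxx; subst hkk
      have hii : i = i' := by
        rcases Nat.lt_trichotomy i i' with h | h | h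
        · exfalso
          have h1 : (i + 1) * m ≤ i' * m := Nat.mul_le_mul_right m (by omega)
          have h2 : (i + 1) * m - ρ ≤ i' * m - ρ := Nat.sub_le_sub_right h1 ρ
          have := lt_of_lt_of_le hxi1.2 (le_trans h2 hxi1'.1)
          exact lt_irrefl x this
        · exact h
        · exfalso
          have h1 : (i' + 1) * m ≤ i * m := Nat.mul_le_mul_right m (by omega)
          have h2 : (i' + 1) * m - ρ ≤ i * m - ρ := Nat.sub_le_sub_right h1 ρ
          have := lt_of_lt_of_le hxi1'.2 (le_trans h2 hxi1.1)
          exact lt_irrefl x this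
      subst hii
      rfl
    · -- surjective
      intro b hb
      rw [hLf, Finset.mem_filter, Finset.mem_range] at hb
      obtain ⟨hbc, hbS⟩ := hb
      obtain ⟨x, k, hxX, hbxk⟩ := hdecomp b hbS
      obtain ⟨i, r, hmr, hxr⟩ : ∃ i r, r < m ∧ x + ρ = m * i + r :=
        ⟨(x + ρ) / m, (x + ρ) % m, Nat.mod_lt _ hm0, (Nat.div_add_mod _ _).symm⟩
      have hik : i + k < q := by
        have h4 : (i + k) * m < q * m := by
          calc (i + k) * m = m * i + k * m := by ring
          _ ≤ (x + ρ) + k * m := by omega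
          _ = (x + k * m) + ρ := by ring
          _ = b + ρ := by rw [hbxk]
          _ < c + ρ := by omega
          _ = q * m := hq
        exact Nat.lt_of_mul_lt_mul_right h4
      refine ⟨⟨i, x, k⟩, ?_, hbxk.symm⟩
      simp only [hT, Finset.mem_sigma, Finset.mem_product, hXf, Finset.mem_filter,
        Finset.mem_Ico, Finset.mem_range]
      refine ⟨by omega, ⟨⟨?_, ?_⟩, hxX⟩, by omega⟩
      · have h5 : i * m = m * i := by ring
        omega
      · have h5 : (i + 1) * m = m * i + m := by ring
        omega
  rw [← key, hT, Finset.card_sigma]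
  apply Finset.sum_congr rfl
  intro i _
  rw [Finset.card_product, Finset.card_range, mul_comm]
end

section
/- Let S be a numerical semigroup with 1 < ⌈c/m⌉ ≤ 2, i.e. m < c ≤ 2m. Then |P∩L|·|L| − 2·d₂ ≥ 0, where L = S ∩ [0,c), P∩L is the set of primitive elements less than c, and d₂ is the number of decomposable elements of S in [c, c+m). Consequently e(S)·|L| ≥ c, i.e. S satisfies Wilf's conjecture. -/
/-!
Since `c ≤ 2m` and every decomposable element is at least `2m`, the primitive elements below `c`
are exactly the `n` nonzero elements of `L`, so `|L| = n + 1`. A decomposable element of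
`[c, c + m)` is a sum of two of them, whence `2 d₂ ≤ n (n + 1)`. Every element of `[c, c + m)` is
decomposable or primitive, so `c ≤ 2m ≤ 2 d₂ + 2 p₂ ≤ (n + p₂)(n + 1) ≤ e(S) |L|`, where `p₂`
counts the primitive elements in `[c, c + m)`.
-/

open Set

namespace NumericalSemigroup

def decomposables (S : Set ℕ) : Set ℕ :=
  {x | ∃ y ∈ S, ∃ z ∈ S, y ≠ 0 ∧ z ≠ 0 ∧ x = y + z}

def primitives (S : Set ℕ) : Set ℕ :=
  {x | x ∈ S ∧ x ≠ 0} \ decomposables S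

variable {S : Set ℕ} {m c : ℕ}

lemma mem_of_sSup_compl_lt (hS : Sᶜ.Finite) {x : ℕ} (hx : sSup Sᶜ < x) : x ∈ S := by
  by_contra h
  exact (le_csSup hS.bddAbove h).not_gt hx

lemma two_mul_le_of_mem_decomposables (hm : ∀ x ∈ S, x ≠ 0 → m ≤ x) {x : ℕ}
    (hx : x ∈ decomposables S) : 2 * m ≤ x := by
  obtain ⟨y, hy, z, hz, hy0, hz0, rfl⟩ := hx
  linarith [hm y hy hy0, hm z hz hz0]

lemma inter_Ico_subset_primitives (hm : ∀ x ∈ S, x ≠ 0 → m ≤ x) (hc : c ≤ 2 * m) :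
    S ∩ Ico m c ⊆ primitives S := by
  rintro x ⟨hxS, hmx, hxc⟩
  refine ⟨⟨hxS, by omega⟩, fun hxD => ?_⟩
  have := two_mul_le_of_mem_decomposables hm hxD
  omega

lemma primitives_inter_inter_Ico_zero (hm : ∀ x ∈ S, x ≠ 0 → m ≤ x) (hc : c ≤ 2 * m) :
    primitives S ∩ (S ∩ Ico 0 c) = S ∩ Ico m c := by
  ext x
  constructor
  · rintro ⟨⟨⟨hxS, hx0⟩, -⟩, -, -, hxc⟩
    exact ⟨hxS, hm x hxS hx0, hxc⟩
  · intro hx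
    exact ⟨inter_Ico_subset_primitives hm hc hx, hx.1, Nat.zero_le x, hx.2.2⟩

lemma ncard_inter_Ico_zero (h0 : 0 ∈ S) (hm : ∀ x ∈ S, x ≠ 0 → m ≤ x) (hm0 : m ≠ 0)
    (hc0 : 0 < c) : (S ∩ Ico 0 c).ncard = (S ∩ Ico m c).ncard + 1 := by
  have hinsert : S ∩ Ico 0 c = insert 0 (S ∩ Ico m c) := by
    ext x
    rcases eq_or_ne x 0 with rfl | hx0
    · simp [h0, hc0]
    · simp only [mem_inter_iff, mem_Ico, mem_insert_iff, hx0, false_or]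
      exact and_congr_right fun hxS => ⟨fun h => ⟨hm x hxS hx0, h.2⟩, fun h => ⟨by omega, h.2⟩⟩
  rw [hinsert, ncard_insert_of_notMem (by simp; omega) ((finite_Ico m c).subset inter_subset_right)]

/-- Both summands of a decomposable `x < c + m` are at least `m`, hence below `c`. -/
lemma two_mul_ncard_decomposables_inter_Ico_le (hm : ∀ x ∈ S, x ≠ 0 → m ≤ x) :
    2 * (decomposables S ∩ Ico c (c + m)).ncard ≤
      (S ∩ Ico m c).ncard * ((S ∩ Ico m c).ncard + 1) := by
  set A := S ∩ Ico m c
  have hA : A.Finite := (finite_Ico m c).subset inter_subset_right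
  set sums := hA.toFinset.sym2.image (Sym2.lift ⟨(· + ·), add_comm⟩)
  have hsub : decomposables S ∩ Ico c (c + m) ⊆ sums := by
    rintro _ ⟨⟨y, hy, z, hz, hy0, hz0, rfl⟩, -, hyz⟩
    have := hm y hy hy0
    have := hm z hz hz0
    exact Finset.mem_image.2 ⟨s(y, z), Finset.mk_mem_sym2_iff.2
      ⟨hA.mem_toFinset.2 ⟨hy, by omega, by omega⟩, hA.mem_toFinset.2 ⟨hz, by omega, by omega⟩⟩, rfl⟩
  calc 2 * (decomposables S ∩ Ico c (c + m)).ncard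
      ≤ 2 * hA.toFinset.sym2.card := by
        gcongr
        exact (ncard_le_ncard hsub (Finset.finite_toSet _)).trans_eq (ncard_coe_finset _)
          |>.trans Finset.card_image_le
    _ = A.ncard * (A.ncard + 1) := by
        rw [Finset.card_sym2, ← ncard_eq_toFinset_card A hA, mul_comm,
          ← Nat.add_one_mul_choose_eq, Nat.choose_one_right, mul_comm]

lemma le_ncard_decomposables_add_ncard_primitives (hcS : ∀ x, c ≤ x → x ∈ S) (hc0 : 0 < c) :
    m ≤ (decomposables S ∩ Ico c (c + m)).ncard + (primitives S ∩ Ico c (c + m)).ncard := by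
  have hcover : Ico c (c + m) ⊆
      (decomposables S ∩ Ico c (c + m)) ∪ (primitives S ∩ Ico c (c + m)) := by
    intro x hx
    by_cases hxD : x ∈ decomposables S
    · exact Or.inl ⟨hxD, hx⟩
    · exact Or.inr ⟨⟨⟨hcS x hx.1, by have := hx.1; omega⟩, hxD⟩, hx⟩
  calc m = (Ico c (c + m)).ncard := by
        rw [← Finset.coe_Ico, ncard_coe_finset, Nat.card_Ico]; omega
    _ ≤ _ := ncard_le_ncard hcover (((finite_Ico _ _).subset inter_subset_right).union
        ((finite_Ico _ _).subset inter_subset_right))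
    _ ≤ _ := ncard_union_le _ _

/-- Above the conductor, `x = m + (x - m)` is decomposable once `x - m ≥ c`. -/
lemma primitives_subset_Iio (hcS : ∀ x, c ≤ x → x ∈ S) (hmS : m ∈ S) (hm0 : m ≠ 0)
    (hc0 : 0 < c) : primitives S ⊆ Iio (c + m) := by
  rintro x ⟨-, hxD⟩
  rw [mem_Iio]
  by_contra! h
  exact hxD ⟨m, hmS, x - m, hcS _ (by omega), hm0, by omega, by omega⟩

lemma ncard_add_ncard_primitives_inter_Ico_le (hm : ∀ x ∈ S, x ≠ 0 → m ≤ x) (hc : c ≤ 2 * m)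
    (hP : (primitives S).Finite) :
    (S ∩ Ico m c).ncard + (primitives S ∩ Ico c (c + m)).ncard ≤ (primitives S).ncard := by
  have hdisj : Disjoint (S ∩ Ico m c) (primitives S ∩ Ico c (c + m)) :=
    disjoint_left.2 fun x hx hx' => by have := hx.2.2; have := hx'.2.1; omega
  rw [← ncard_union_eq hdisj ((finite_Ico m c).subset inter_subset_right)
    (hP.subset inter_subset_left)]
  exact ncard_le_ncard (union_subset (inter_Ico_subset_primitives hm hc) inter_subset_left) hP

end NumericalSemigroup

open NumericalSemigroup in
theorem wilf_q_two_general (S : Set ℕ) (m c : ℕ)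
    (hS0 : 0 ∈ S)
    (hSfin : (Sᶜ : Set ℕ).Finite)
    (hm : m = sInf {n : ℕ | n ∈ S ∧ n ≠ 0})
    (hc : c = sSup (Sᶜ : Set ℕ) + 1)
    (hmc : m < c) (hc2m : c ≤ 2 * m)
    (P D L : Set ℕ)
    (hD : D = {x : ℕ | ∃ y ∈ S, ∃ z ∈ S, y ≠ 0 ∧ z ≠ 0 ∧ x = y + z})
    (hP : P = {x : ℕ | x ∈ S ∧ x ≠ 0} \ D)
    (hL : L = S ∩ Set.Ico 0 c) :
    2 * (D ∩ Set.Ico c (c + m)).ncard ≤ (P ∩ L).ncard * L.ncard ∧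
    c ≤ P.ncard * L.ncard := by
  obtain rfl : D = decomposables S := hD
  obtain rfl : P = primitives S := hP
  subst hL
  have hcS : ∀ x, c ≤ x → x ∈ S := fun x hx => mem_of_sSup_compl_lt hSfin (by omega)
  have hmS : m ∈ S ∧ m ≠ 0 :=
    hm ▸ Nat.sInf_mem (s := {n | n ∈ S ∧ n ≠ 0}) ⟨c, hcS c le_rfl, by omega⟩
  have hmle : ∀ x ∈ S, x ≠ 0 → m ≤ x := fun x hx hx0 => hm ▸ Nat.sInf_le ⟨hx, hx0⟩
  have hL := ncard_inter_Ico_zero hS0 hmle hmS.2 (by omega : 0 < c)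
  have hd₂ := two_mul_ncard_decomposables_inter_Ico_le (c := c) hmle
  refine ⟨by rwa [primitives_inter_inter_Ico_zero hmle hc2m, hL], ?_⟩
  have hn : 0 < (S ∩ Ico m c).ncard :=
    Set.Nonempty.ncard_pos ((finite_Ico m c).subset inter_subset_right) ⟨m, hmS.1, le_rfl, hmc⟩
  have hcover := le_ncard_decomposables_add_ncard_primitives hcS (m := m) (by omega)
  have hPfin := (finite_Iio _).subset (primitives_subset_Iio hcS hmS.1 hmS.2 (by omega))
  have hPcard := ncard_add_ncard_primitives_inter_Ico_le hmle hc2m hPfin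
  rw [hL]
  calc c ≤ 2 * m := hc2m
    _ ≤ ((S ∩ Ico m c).ncard + (primitives S ∩ Ico c (c + m)).ncard) *
        ((S ∩ Ico m c).ncard + 1) := by nlinarith
    _ ≤ _ := Nat.mul_le_mul_right _ hPcard

/-- Wilf's conjecture for `q = 2`: if `m < c ≤ 2m` then
`|P∩L|·|L| − 2·d₂ ≥ 0`, and consequently `e(S)·|L| ≥ c`. -/
theorem wilf_q_two (S : Set ℕ) (m c : ℕ)
    (hS0 : 0 ∈ S) (hSadd : ∀ a ∈ S, ∀ b ∈ S, a + b ∈ S)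
    (hSfin : (Sᶜ : Set ℕ).Finite)
    (hm : m = sInf {n : ℕ | n ∈ S ∧ n ≠ 0})
    (hc : c = sSup (Sᶜ : Set ℕ) + 1)
    (hmc : m < c) (hc2m : c ≤ 2 * m)
    (P D L : Set ℕ)
    (hD : D = {x : ℕ | ∃ y ∈ S, ∃ z ∈ S, y ≠ 0 ∧ z ≠ 0 ∧ x = y + z})
    (hP : P = {x : ℕ | x ∈ S ∧ x ≠ 0} \ D)
    (hL : L = S ∩ Set.Ico 0 c) :
    2 * (D ∩ Set.Ico c (c + m)).ncard ≤ (P ∩ L).ncard * L.ncard ∧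
    c ≤ P.ncard * L.ncard :=
  wilf_q_two_general S m c hS0 hSfin hm hc hmc hc2m P D L hD hP hL
end

section
/- Let r ≥ 1 be an integer and u ≥ v ≥ w real numbers with v ≥ r and w ≥ r−1. If C(u,r) = C(v,r) + C(w,r−1), then C(u+1, r+1) ≥ C(v+1, r+1) + C(w+1, r). -/
/-- Generalized binomial coefficient `C(x, i) = x(x−1)⋯(x−i+1)/i!` for real `x`. -/
noncomputable def binomR (x : ℝ) (i : ℕ) : ℝ :=
  (∏ j ∈ Finset.range i, (x - j)) / (Nat.factorial i)

/-! Pascal's rule turns the claim into `C(w, r) ≤ C(u, r+1) − C(v, r+1)`, and the hypothesis says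
that `[w, w+1]` and `[v, u]` carry the same increment `C(w, r−1)` of `g = C(·, r)`. Measured against
`g`, the function `f = C(·, r+1)` is convex on `[r−1, ∞)`: by Cauchy's mean value theorem its
chords `Δf / Δg` are values of `f' / g'`, and `f' / g' = ((x − r) + P / P') / (r + 1)` with
`P(x) = x(x−1)⋯(x−r+1)` is increasing there, because `P / P' = 1 / ∑ⱼ 1 / (x − j)` is.
So an equal `g`-increment further to the right yields a larger `f`-increment. -/

open Polynomial Set
open scoped Nat

section descPochhammer

lemma eval_derivative_descPochhammer_succ {R : Type*} [CommRing R] (n : ℕ) (x : R) :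
    (derivative (descPochhammer R (n + 1))).eval x =
      (derivative (descPochhammer R n)).eval x * (x - n) + (descPochhammer R n).eval x := by
  simp [descPochhammer_succ_right, derivative_mul]

variable {S : Type*} [CommRing S] [LinearOrder S] [IsStrictOrderedRing S]

lemma eval_derivative_descPochhammer_pos {n : ℕ} (hn : 1 ≤ n) {x : S} (hx : (n : S) - 1 < x) :
    0 < (derivative (descPochhammer S n)).eval x := by
  induction n, hn using Nat.le_induction generalizing x with
  | base => simp
  | succ n hn ih =>
    push_cast at hx
    rw [eval_derivative_descPochhammer_succ]
    have hP := descPochhammer_pos (S := S) (n := n) (s := x) (by linarith)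
    have hP' := ih (x := x) (by linarith)
    nlinarith

lemma eval_descPochhammer_mul_eval_derivative_le {n : ℕ} {x y : S} (hx : (n : S) - 1 < x)
    (hxy : x ≤ y) :
    (descPochhammer S n).eval x * (derivative (descPochhammer S n)).eval y ≤
      (descPochhammer S n).eval y * (derivative (descPochhammer S n)).eval x := by
  induction n with
  | zero => simp
  | succ n ih =>
    push_cast at hx
    rw [descPochhammer_succ_eval, descPochhammer_succ_eval, eval_derivative_descPochhammer_succ,
      eval_derivative_descPochhammer_succ]
    have hPx := descPochhammer_pos (S := S) (n := n) (s := x) (by linarith)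
    have hPy := descPochhammer_pos (S := S) (n := n) (s := y) (by linarith)
    nlinarith [mul_le_mul_of_nonneg_left (ih (by linarith))
        (mul_nonneg (sub_nonneg.2 hx.le) (sub_nonneg.2 (hx.le.trans hxy))),
      mul_le_mul_of_nonneg_left hxy (mul_pos hPx hPy).le]

end descPochhammer

lemma monotoneOn_eval_descPochhammer_div_eval_derivative {K : Type*} [Field K] [LinearOrder K]
    [IsStrictOrderedRing K] {n : ℕ} (hn : 1 ≤ n) :
    MonotoneOn (fun x => (descPochhammer K n).eval x / (derivative (descPochhammer K n)).eval x)
      (Ioi ((n : K) - 1)) := by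
  intro x hx y hy hxy
  rw [div_le_div_iff₀ (eval_derivative_descPochhammer_pos hn hx)
    (eval_derivative_descPochhammer_pos hn hy)]
  exact eval_descPochhammer_mul_eval_derivative_le hx hxy

section relSlope

noncomputable def relSlope (f g : ℝ → ℝ) (p q : ℝ) : ℝ := (f q - f p) / (g q - g p)

variable {f g f' g' : ℝ → ℝ} {a p q s t : ℝ}

lemma relSlope_le_relSlope_left (hpq : g p < g q) (hqt : g q < g t)
    (h : relSlope f g p q ≤ relSlope f g q t) : relSlope f g p q ≤ relSlope f g p t := by
  unfold relSlope at *
  rw [div_le_div_iff₀ (sub_pos.2 hpq) (sub_pos.2 hqt)] at h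
  rw [div_le_div_iff₀ (sub_pos.2 hpq) (sub_pos.2 (hpq.trans hqt))]
  linarith

lemma relSlope_le_relSlope_right (hpq : g p < g q) (hqt : g q < g t)
    (h : relSlope f g p q ≤ relSlope f g q t) : relSlope f g p t ≤ relSlope f g q t := by
  unfold relSlope at *
  rw [div_le_div_iff₀ (sub_pos.2 hpq) (sub_pos.2 hqt)] at h
  rw [div_le_div_iff₀ (sub_pos.2 (hpq.trans hqt)) (sub_pos.2 hqt)]
  linarith

lemma strictMonoOn_Ici_of_hasDerivAt_pos (hg : ∀ x ∈ Ici a, HasDerivAt g (g' x) x)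
    (hg' : ∀ x ∈ Ioi a, 0 < g' x) : StrictMonoOn g (Ici a) :=
  strictMonoOn_of_hasDerivWithinAt_pos (convex_Ici a)
    (fun x hx => (hg x hx).continuousAt.continuousWithinAt)
    (fun x hx => (hg x (interior_subset hx)).hasDerivWithinAt)
    (fun x hx => hg' x (by rwa [interior_Ici] at hx))

lemma exists_relSlope_eq (hf : ∀ x ∈ Ici a, HasDerivAt f (f' x) x)
    (hg : ∀ x ∈ Ici a, HasDerivAt g (g' x) x) (hg' : ∀ x ∈ Ioi a, 0 < g' x)
    (ha : a ≤ p) (hpq : p < q) : ∃ ξ ∈ Ioo p q, relSlope f g p q = f' ξ / g' ξ := by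
  have hIcc : Icc p q ⊆ Ici a := fun x hx => ha.trans hx.1
  have hIoo : Ioo p q ⊆ Ici a := Ioo_subset_Icc_self.trans hIcc
  obtain ⟨ξ, hξ, hcauchy⟩ := exists_ratio_hasDerivAt_eq_ratio_slope f f' hpq
    (fun x hx => (hf x (hIcc hx)).continuousAt.continuousWithinAt) (fun x hx => hf x (hIoo hx))
    g g' (fun x hx => (hg x (hIcc hx)).continuousAt.continuousWithinAt)
    (fun x hx => hg x (hIoo hx))
  have hgpq : 0 < g q - g p :=
    sub_pos.2 (strictMonoOn_Ici_of_hasDerivAt_pos hg hg' ha (ha.trans hpq.le) hpq)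
  refine ⟨ξ, hξ, ?_⟩
  rw [relSlope, div_eq_div_iff hgpq.ne' (hg' ξ (ha.trans_lt hξ.1)).ne']
  linarith

lemma relSlope_le_relSlope_of_le (hf : ∀ x ∈ Ici a, HasDerivAt f (f' x) x)
    (hg : ∀ x ∈ Ici a, HasDerivAt g (g' x) x) (hg' : ∀ x ∈ Ioi a, 0 < g' x)
    (hfg : MonotoneOn (fun x => f' x / g' x) (Ioi a))
    (ha : a ≤ p) (hpq : p < q) (hqs : q ≤ s) (hst : s < t) :
    relSlope f g p q ≤ relSlope f g s t := by
  obtain ⟨ξ, hξ, hpq⟩ := exists_relSlope_eq hf hg hg' ha hpq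
  obtain ⟨η, hη, hst⟩ := exists_relSlope_eq hf hg hg' (by linarith) hst
  rw [hpq, hst]
  exact hfg (ha.trans_lt hξ.1) (by simp only [mem_Ioi]; linarith [hξ.1, hη.1])
    (by linarith [hξ.2, hη.1])

lemma relSlope_mono (hf : ∀ x ∈ Ici a, HasDerivAt f (f' x) x)
    (hg : ∀ x ∈ Ici a, HasDerivAt g (g' x) x) (hg' : ∀ x ∈ Ioi a, 0 < g' x)
    (hfg : MonotoneOn (fun x => f' x / g' x) (Ioi a))
    (ha : a ≤ p) (hps : p ≤ s) (hqt : q ≤ t) (hpq : p < q) (hst : s < t) :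
    relSlope f g p q ≤ relSlope f g s t := by
  have hmono := strictMonoOn_Ici_of_hasDerivAt_pos hg hg'
  have has : a ≤ s := ha.trans hps
  rcases le_or_gt q s with hqs | hsq
  · exact relSlope_le_relSlope_of_le hf hg hg' hfg ha hpq hqs hst
  calc relSlope f g p q ≤ relSlope f g s q := by
        rcases hps.eq_or_lt with rfl | hps
        · rfl
        · exact relSlope_le_relSlope_right (hmono ha has hps) (hmono has (has.trans hsq.le) hsq)
            (relSlope_le_relSlope_of_le hf hg hg' hfg ha hps le_rfl hsq)
    _ ≤ relSlope f g s t := by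
        rcases hqt.eq_or_lt with rfl | hqt
        · rfl
        · have haq : a ≤ q := has.trans hsq.le
          exact relSlope_le_relSlope_left (hmono has haq hsq) (hmono haq (haq.trans hqt.le) hqt)
            (relSlope_le_relSlope_of_le hf hg hg' hfg has hsq le_rfl hqt)

lemma sub_le_sub_of_sub_eq_sub (hf : ∀ x ∈ Ici a, HasDerivAt f (f' x) x)
    (hg : ∀ x ∈ Ici a, HasDerivAt g (g' x) x) (hg' : ∀ x ∈ Ioi a, 0 < g' x)
    (hfg : MonotoneOn (fun x => f' x / g' x) (Ioi a))
    (ha : a ≤ p) (hpq : p < q) (hps : p ≤ s) (hst : s ≤ t) (heq : g t - g s = g q - g p) :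
    f q - f p ≤ f t - f s := by
  have hmono := strictMonoOn_Ici_of_hasDerivAt_pos hg hg'
  have has : a ≤ s := ha.trans hps
  have hgpq : 0 < g q - g p := sub_pos.2 (hmono ha (ha.trans hpq.le) hpq)
  have hst' : s < t := (hmono.lt_iff_lt has (has.trans hst)).1 (by linarith)
  have hqt : q ≤ t := (hmono.le_iff_le (ha.trans hpq.le) (has.trans hst)).1
    (by linarith [hmono.monotoneOn ha has hps])
  have := relSlope_mono hf hg hg' hfg ha hps hqt hpq hst'
  rwa [relSlope, relSlope, heq, div_le_div_iff_of_pos_right hgpq] at this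

end relSlope

section binomR

lemma binomR_eq_eval_descPochhammer (x : ℝ) (i : ℕ) :
    binomR x i = (descPochhammer ℝ i).eval x / i ! := by
  rw [binomR, descPochhammer_eval_eq_prod_range]

lemma binomR_succ_succ (x : ℝ) (i : ℕ) :
    binomR (x + 1) (i + 1) = binomR x i + binomR x (i + 1) := by
  have hshift :
      (descPochhammer ℝ (i + 1)).eval (x + 1) = (x + 1) * (descPochhammer ℝ i).eval x := by
    simp [descPochhammer_succ_left]
  rw [binomR_eq_eval_descPochhammer, binomR_eq_eval_descPochhammer, binomR_eq_eval_descPochhammer,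
    hshift, descPochhammer_succ_eval, Nat.factorial_succ]
  push_cast
  field_simp
  ring

noncomputable def binomRDeriv (i : ℕ) (x : ℝ) : ℝ :=
  (derivative (descPochhammer ℝ i)).eval x / i !

lemma hasDerivAt_binomR (i : ℕ) (x : ℝ) :
    HasDerivAt (binomR · i) (binomRDeriv i x) x := by
  simp only [binomR_eq_eval_descPochhammer]
  exact ((descPochhammer ℝ i).hasDerivAt x).div_const _

lemma binomRDeriv_pos {i : ℕ} (hi : 1 ≤ i) {x : ℝ} (hx : (i : ℝ) - 1 < x) : 0 < binomRDeriv i x :=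
  div_pos (eval_derivative_descPochhammer_pos hi hx) (by positivity)

lemma monotoneOn_binomRDeriv_succ_div {r : ℕ} (hr : 1 ≤ r) :
    MonotoneOn (fun x => binomRDeriv (r + 1) x / binomRDeriv r x) (Ioi ((r : ℝ) - 1)) := by
  have hmono := monotoneOn_eval_descPochhammer_div_eval_derivative (K := ℝ) hr
  refine MonotoneOn.congr (f₁ := fun x => ((x - r) + (descPochhammer ℝ r).eval x /
      (derivative (descPochhammer ℝ r)).eval x) / (r + 1)) ?_ fun x hx => ?_
  · intro x hx y hy hxy
    have := hmono hx hy hxy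
    dsimp only at this ⊢
    gcongr
  · have := eval_derivative_descPochhammer_pos hr (mem_Ioi.1 hx)
    simp only [binomRDeriv, eval_derivative_descPochhammer_succ, Nat.factorial_succ]
    push_cast
    field_simp

end binomR

theorem binomR_ineq_general (r : ℕ) (hr : 1 ≤ r) (u v w : ℝ)
    (huv : v ≤ u) (hvw : w ≤ v) (hw : (r : ℝ) - 1 ≤ w)
    (heq : binomR u r = binomR v r + binomR w (r - 1)) :
    binomR (v + 1) (r + 1) + binomR (w + 1) r ≤ binomR (u + 1) (r + 1) := by
  have hpascal : binomR (w + 1) r = binomR w (r - 1) + binomR w r := by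
    simpa [Nat.sub_add_cancel hr] using binomR_succ_succ w (r - 1)
  have hstep := sub_le_sub_of_sub_eq_sub (f := (binomR · (r + 1))) (g := (binomR · r))
    (fun x _ => hasDerivAt_binomR (r + 1) x) (fun x _ => hasDerivAt_binomR r x)
    (fun x hx => binomRDeriv_pos hr hx) (monotoneOn_binomRDeriv_succ_div hr)
    hw (lt_add_one w) hvw huv (by linarith)
  simp only [binomR_succ_succ] at hstep ⊢
  linarith

/-- If `u ≥ v ≥ w`, `v ≥ r`, `w ≥ r−1` and `C(u,r) = C(v,r) + C(w,r−1)`, then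
`C(u+1, r+1) ≥ C(v+1, r+1) + C(w+1, r)`. -/
theorem binomR_ineq (r : ℕ) (hr : 1 ≤ r) (u v w : ℝ)
    (huv : v ≤ u) (hvw : w ≤ v) (hv : (r : ℝ) ≤ v) (hw : (r : ℝ) - 1 ≤ w)
    (heq : binomR u r = binomR v r + binomR w (r - 1)) :
    binomR (v + 1) (r + 1) + binomR (w + 1) r ≤ binomR (u + 1) (r + 1) :=
  binomR_ineq_general r hr u v w huv hvw hw heq
end

section
/- Let a ≥ 0 and i ≥ 1 be integers, and let x ≥ i−1 be the unique real number with a = C(x, i). Then a^⟨i⟩ ≤ C(x+1, i+1), where a^⟨i⟩ = Σ_{j=1}^{i} C(a_j+1, j+1) with a = Σ_{j=1}^{i} C(a_j, j) the i-th binomial representation of a. -/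
open Set

theorem binomR_eq_ringChoose (x : ℝ) (k : ℕ) : binomR x k = Ring.choose x k := by
  rw [Ring.choose_eq_smul, binomR, ← Polynomial.aeval_eq_smeval, Polynomial.aeval_def,
    Polynomial.eval₂_eq_eval_map, descPochhammer_map, descPochhammer_eval_eq_prod_range,
    smul_eq_mul, div_eq_inv_mul]

theorem binomR_natCast (n k : ℕ) : binomR n k = n.choose k := by
  rw [binomR_eq_ringChoose, Ring.choose_natCast]

theorem binomR_add_one_succ (x : ℝ) (k : ℕ) :
    binomR (x + 1) (k + 1) = binomR x k + binomR x (k + 1) := by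
  simp only [binomR_eq_ringChoose, Ring.choose_succ_succ]

theorem binomR_zero (x : ℝ) : binomR x 0 = 1 := by
  simp [binomR]

theorem binomR_succ (x : ℝ) (k : ℕ) :
    binomR x (k + 1) = binomR x k * (x - k) / (k + 1) := by
  rw [binomR, binomR, Finset.prod_range_succ, Nat.factorial_succ]
  push_cast
  field_simp

theorem continuous_binomR (k : ℕ) : Continuous (binomR · k) := by
  unfold binomR
  fun_prop

theorem binomR_nonneg {k : ℕ} {x : ℝ} (hx : (k : ℝ) - 1 ≤ x) : 0 ≤ binomR x k := by
  induction k generalizing x with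
  | zero => simp [binomR_zero]
  | succ k ih =>
    push_cast at hx
    rw [binomR_succ]
    exact div_nonneg (mul_nonneg (ih (by linarith)) (by linarith)) (by positivity)

theorem binomR_pos {k : ℕ} {x : ℝ} (hx : (k : ℝ) - 1 < x) : 0 < binomR x k := by
  induction k generalizing x with
  | zero => simp [binomR_zero]
  | succ k ih =>
    push_cast at hx
    rw [binomR_succ]
    exact div_pos (mul_pos (ih (by linarith)) (by linarith)) (by positivity)

theorem binomR_monotoneOn (k : ℕ) : MonotoneOn (binomR · k) (Ici ((k : ℝ) - 1)) := by
  induction k with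
  | zero => simp [binomR_zero, monotoneOn_const]
  | succ k ih =>
    intro x hx y hy hxy
    simp only [mem_Ici, Nat.cast_add_one, add_sub_cancel_right] at hx hy
    simp only [binomR_succ]
    gcongr ?_ / _
    exact mul_le_mul (ih (by simp; linarith) (by simp; linarith) hxy) (by linarith) (by linarith)
      (binomR_nonneg (by linarith))

theorem binomR_strictMonoOn (k : ℕ) : StrictMonoOn (binomR · (k + 1)) (Ici (k : ℝ)) := by
  intro x hx y hy hxy
  simp only [mem_Ici] at hx hy
  simp only [binomR_succ]
  gcongr ?_ / _
  exact mul_lt_mul' (binomR_monotoneOn k (by simp; linarith) (by simp; linarith) hxy.le)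
    (by linarith) (by linarith) (binomR_pos (by linarith))

theorem binomR_convexOn (k : ℕ) : ConvexOn ℝ (Ici ((k : ℝ) - 1)) (binomR · k) := by
  induction k with
  | zero => simpa [binomR_zero] using convexOn_const 1 (convex_Ici _)
  | succ k ih =>
    have hsub : Ici ((k : ℝ)) ⊆ Ici ((k : ℝ) - 1) := Ici_subset_Ici.mpr (by linarith)
    have hlin : ConvexOn ℝ (Ici (k : ℝ)) (fun x => x - k) :=
      (convexOn_id (convex_Ici _)).sub (concaveOn_const _ (convex_Ici _))
    have hprod := (ih.subset hsub (convex_Ici _)).mul hlin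
      (fun x hx => binomR_nonneg (by simp at hx; linarith))
      (fun x hx => by simp only [mem_Ici] at hx; linarith)
      ((binomR_monotoneOn k).mono hsub |>.monovaryOn fun x _ y _ hxy => by linarith)
    simpa [binomR_succ, div_eq_inv_mul, Nat.cast_add_one] using
      hprod.smul (inv_nonneg.mpr (by positivity : (0 : ℝ) ≤ k + 1))

theorem binomR_succ_le_add_sub_mul {k : ℕ} {m x : ℝ} (hm : (k : ℝ) ≤ m) (hmx : m ≤ x)
    (hxm : x ≤ m + 1) : binomR x (k + 1) ≤ binomR m (k + 1) + (x - m) * binomR m k := by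
  have hconv := (binomR_convexOn (k + 1)).2 (by simpa using hm : m ∈ Ici ((k + 1 : ℕ) - 1 : ℝ))
    (by simp; linarith : m + 1 ∈ Ici ((k + 1 : ℕ) - 1 : ℝ))
    (by linarith : 0 ≤ 1 - (x - m)) (by linarith : 0 ≤ x - m) (by ring)
  simp only [binomR_add_one_succ, smul_eq_mul] at hconv
  rw [show (1 - (x - m)) * m + (x - m) * (m + 1) = x by ring] at hconv
  linarith

theorem sub_binomR_mul_le_sub_binomR {k : ℕ} {m x : ℝ} (hm : (k : ℝ) ≤ m) (hmx : m ≤ x)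
    (hxm : x ≤ m + 1) (hx : (k : ℝ) + 1 ≤ x) :
    (binomR x (k + 1) - binomR m (k + 1)) * (x - 1 - k) / (k + 1) ≤
      binomR x (k + 2) - binomR m (k + 2) := by
  have hchord := binomR_succ_le_add_sub_mul hm hmx hxm
  have hQ : binomR m k * (m - k) = (k + 1) * binomR m (k + 1) := by
    rw [binomR_succ]; field_simp
  have hS : (binomR x (k + 1) - binomR m (k + 1)) * (x - 1 - k) ≤
      (k + 1) * binomR m (k + 1) * (x - m) := by
    calc (binomR x (k + 1) - binomR m (k + 1)) * (x - 1 - k)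
        ≤ (x - m) * binomR m k * (x - 1 - k) := by gcongr <;> linarith
      _ ≤ (x - m) * binomR m k * (m - k) := by
          gcongr
          · exact mul_nonneg (by linarith) (binomR_nonneg (by linarith))
          · linarith
      _ = (k + 1) * binomR m (k + 1) * (x - m) := by rw [mul_assoc, hQ]; ring
  have hsucc (y : ℝ) : binomR y (k + 2) = binomR y (k + 1) * (y - (k + 1)) / (k + 2) := by
    rw [binomR_succ]; push_cast; ring
  rw [hsucc, hsucc, div_le_iff₀ (by positivity)]
  field_simp
  nlinarith

theorem exists_le_binomR_and_binomR_succ_le {k : ℕ} {S y : ℝ} (hy : (k : ℝ) ≤ y) (hS : 0 ≤ S)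
    (hSy : S ≤ binomR y k) :
    ∃ u ∈ Icc (k : ℝ) y, S ≤ binomR u k ∧ binomR u (k + 1) ≤ S * (y - k) / (k + 1) := by
  have hkk : binomR k k = 1 := by simp [binomR_natCast]
  rcases lt_or_ge S 1 with hS1 | hS1
  · refine ⟨k, ⟨le_rfl, hy⟩, by linarith, ?_⟩
    rw [binomR_natCast, Nat.choose_succ_self, Nat.cast_zero]
    exact div_nonneg (mul_nonneg hS (by linarith)) (by positivity)
  · obtain ⟨u, hu, huS⟩ := intermediate_value_Icc hy (continuous_binomR k).continuousOn
      (show S ∈ Icc (binomR k k) (binomR y k) from ⟨hkk ▸ hS1, hSy⟩)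
    refine ⟨u, hu, huS.ge, ?_⟩
    rw [binomR_succ, show binomR u k = S from huS]
    gcongr
    exact hu.2

theorem Fin.val_le_of_strictMono {n : ℕ} {f : Fin n → ℕ} (hf : StrictMono f) (j : Fin n) :
    (j : ℕ) ≤ f j := by
  obtain ⟨j, hj⟩ := j
  induction j with
  | zero => exact Nat.zero_le _
  | succ j ih =>
    exact (ih (by omega)).trans_lt (hf (show (⟨j, by omega⟩ : Fin n) < ⟨j + 1, hj⟩ from
      Nat.lt_succ_self j))

theorem sum_choose_lt_choose_of_strictMono {k n : ℕ} {f : Fin k → ℕ} (hf : StrictMono f)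
    (hfn : ∀ j, f j < n) : ∑ j : Fin k, (f j).choose (j + 1) < n.choose k := by
  induction k generalizing n with
  | zero => simp
  | succ k ih =>
    have hlow := ih (hf.comp Fin.strictMono_castSucc) fun j => hf (Fin.castSucc_lt_last j)
    have htop := Nat.choose_le_choose (k + 1) (hfn (Fin.last k))
    rw [Nat.choose_succ_succ'] at htop
    rw [Fin.sum_univ_castSucc]
    simp only [Function.comp_apply, Fin.val_castSucc, Fin.val_last] at hlow ⊢
    omega

theorem sum_choose_add_two_le_binomR {k : ℕ} {f : Fin k → ℕ} (hf : StrictMono f) {x : ℝ}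
    (hx : (k : ℝ) ≤ x) (ha : ∑ j : Fin k, ((f j).choose (j + 1) : ℝ) ≤ binomR x k) :
    ∑ j : Fin k, ((f j).choose (j + 2) : ℝ) ≤ binomR x (k + 1) := by
  induction k generalizing x with
  | zero => simpa [binomR_succ, binomR_zero] using hx
  | succ k ih =>
    set m := f (Fin.last k)
    have hg : StrictMono fun j : Fin k => f j.castSucc := hf.comp Fin.strictMono_castSucc
    have hkm : (k : ℝ) ≤ m := by exact_mod_cast Fin.val_le_of_strictMono hf (Fin.last k)
    push_cast at hx
    rw [Fin.sum_univ_castSucc] at ha ⊢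
    simp only [Fin.val_castSucc, Fin.val_last] at ha ⊢
    rw [← binomR_natCast] at ha ⊢
    set b := ∑ j : Fin k, ((f j.castSucc).choose (j + 1) : ℝ)
    have hb0 : 0 ≤ b := by positivity
    have hIH (u : ℝ) (hu : (k : ℝ) ≤ u) (hbu : b ≤ binomR u k) :
        ∑ j : Fin k, ((f j.castSucc).choose (j + 2) : ℝ) ≤ binomR u (k + 1) :=
      ih hg hu hbu
    rcases le_or_gt ((m : ℝ) + 1) x with hmx | hxm
    · have hbm : b ≤ binomR m k := by
        have := sum_choose_lt_choose_of_strictMono hg fun j => hf (Fin.castSucc_lt_last j)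
        rw [binomR_natCast]
        simp only [b, m]
        exact_mod_cast this.le
      calc _ ≤ binomR m (k + 1) + binomR m (k + 2) := by linarith [hIH m hkm hbm]
        _ = binomR (m + 1) (k + 2) := (binomR_add_one_succ _ _).symm
        _ ≤ binomR x (k + 2) :=
          binomR_monotoneOn _ (by simp; linarith) (by simp; linarith) hmx
    · have hmx : (m : ℝ) ≤ x := by
        by_contra! h
        linarith [binomR_strictMonoOn k (by simp; linarith) hkm h]
      have hSy : binomR x (k + 1) - binomR m (k + 1) ≤ binomR (x - 1) k := by
        have hpascal := binomR_add_one_succ (x - 1) k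
        rw [sub_add_cancel] at hpascal
        linarith [binomR_monotoneOn (k + 1) (by simp; linarith) (by simpa using hkm)
          (by linarith : x - 1 ≤ m)]
      obtain ⟨u, ⟨hku, -⟩, hSu, hu⟩ :=
        exists_le_binomR_and_binomR_succ_le (by linarith) (by linarith) hSy
      linarith [hIH u hku (by linarith), sub_binomR_mul_le_sub_binomR hkm hmx hxm.le hx]

/-- If `a = C(x, i)` with `x ≥ i−1`, then `a^⟨i⟩ ≤ C(x+1, i+1)`, where `a^⟨i⟩`
is computed from the `i`-th binomial representation of `a`. -/
theorem macaulay_bound (a i : ℕ) (hi : 1 ≤ i) (x : ℝ)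
    (hx : (i : ℝ) - 1 ≤ x) (hax : (a : ℝ) = binomR x i)
    (f : Fin i → ℕ) (hf : StrictMono f)
    (hrep : a = ∑ j : Fin i, Nat.choose (f j) ((j : ℕ) + 1)) :
    ((∑ j : Fin i, Nat.choose (f j + 1) ((j : ℕ) + 2) : ℕ) : ℝ) ≤
      binomR (x + 1) (i + 1) := by
  obtain ⟨k, rfl⟩ : ∃ k, i = k + 1 := ⟨i - 1, by omega⟩
  have hsum : ∑ j, ((f j).choose (j + 1) : ℝ) = a := by rw [hrep]; push_cast; rfl
  have hpascal : ((∑ j, (f j + 1).choose (j + 2) : ℕ) : ℝ) =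
      a + ∑ j, ((f j).choose (j + 2) : ℝ) := by
    simp only [← hsum, Nat.choose_succ_succ', Nat.cast_sum, Nat.cast_add, Finset.sum_add_distrib]
  rw [hpascal]
  push_cast at hx
  rcases le_or_gt ((k : ℝ) + 1) x with hkx | hxk
  · rw [binomR_add_one_succ]
    exact add_le_add hax.le
      (sum_choose_add_two_le_binomR hf (by simpa using hkx) (hsum.trans hax).le)
  · have ha0 : a = 0 := by
      have : binomR x (k + 1) < binomR (k + 1 : ℕ) (k + 1) :=
        binomR_strictMonoOn k (by simp; linarith) (by simp) (by simpa using hxk)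
      rw [binomR_natCast, Nat.choose_self, ← hax] at this
      exact Nat.lt_one_iff.mp (by exact_mod_cast this)
    have hzero := sum_choose_add_two_le_binomR hf (x := (k + 1 : ℕ)) le_rfl
      (by rw [hsum, ha0, binomR_natCast]; simp)
    rw [binomR_natCast, Nat.choose_succ_self, Nat.cast_zero] at hzero
    rw [ha0, Nat.cast_zero, zero_add]
    linarith [binomR_nonneg (k := k + 1 + 1) (x := x + 1) (by push_cast; linarith)]
end

section
/- Let R = ⊕_{i≥0} R_i be a standard graded algebra over a field K with Hilbert function h_i = dim_K R_i, and let q ≥ 1 be an integer. Then q·h_q ≤ h_1·(1 + h_1 + ⋯ + h_{q−1}). -/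
/-!
Choose a basis `x₁, …, xₙ` of `R₁`, so `n = h₁`. Then `Rᵢ` is spanned by the monomials of
degree `i` in the `xⱼ`, and the monomials which are not in the span of the lex-smaller ones of
the same degree (the standard monomials) form a basis of `Rᵢ`. Since the lex order is compatible
with multiplication, the sets `Gᵢ` of standard exponents are closed under lowering one exponent.
Counting the pairs `(β, β - eⱼ)` with `β ∈ Gᵢ₊₁`, weighted by `βⱼ`, gives
`(i + 1) |Gᵢ₊₁| ≤ (i + n) |Gᵢ|`, and induction on `q` turns these inequalities into
`q h_q ≤ n (h₀ + ⋯ + h_{q-1})` with `h₀ = 1`.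
-/

open Finset Submodule Module

section Pivots

variable (K : Type*) {M ι : Type*} [Field K] [AddCommGroup M] [Module K M] [LinearOrder ι]

open Classical in
noncomputable def pivots (s : Finset ι) (v : ι → M) : Finset ι :=
  {a ∈ s | v a ∉ span K (v '' ↑{b ∈ s | b < a})}

variable {K}

theorem mem_pivots {s : Finset ι} {v : ι → M} {a : ι} :
    a ∈ pivots K s v ↔ a ∈ s ∧ v a ∉ span K (v '' ↑{b ∈ s | b < a}) := by
  classical exact mem_filter

theorem finrank_span_insert_of_notMem {y : M} {S : Set M} (hS : S.Finite) (hy : y ∉ span K S) :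
    finrank K (span K (insert y S)) = finrank K (span K S) + 1 := by
  have : FiniteDimensional K (span K S) := FiniteDimensional.span_of_finite K hS
  have hy0 : y ≠ 0 := fun h => hy (h ▸ zero_mem _)
  have h := finrank_sup_add_finrank_inf_eq (K ∙ y) (span K S)
  rw [(disjoint_span_singleton_of_notMem hy).symm.eq_bot, finrank_bot, add_zero,
    finrank_span_singleton hy0] at h
  rw [span_insert, h, add_comm]

theorem finrank_span_image_eq_card_pivots (s : Finset ι) (v : ι → M) :
    finrank K (span K (v '' s)) = #(pivots K s v) := by
  classical
  induction s using Finset.induction_on_max with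
  | empty =>
    rw [coe_empty, Set.image_empty, span_empty, finrank_bot]
    simp [pivots]
  | insert a t hlt ih =>
    have hbelow_a : {b ∈ insert a t | b < a} = t := by
      rw [filter_insert, if_neg (lt_irrefl a), filter_true_of_mem hlt]
    have hbelow : ∀ b ∈ t, {c ∈ insert a t | c < b} = {c ∈ t | c < b} := fun b hb => by
      rw [filter_insert, if_neg (hlt b hb).not_gt]
    have hpivots_t : {b ∈ t | v b ∉ span K (v '' ↑{c ∈ insert a t | c < b})} = pivots K t v :=
      filter_congr fun b hb => by rw [hbelow b hb]
    have hat : a ∉ pivots K t v := fun h => (hlt a (mem_pivots.1 h).1).false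
    rw [pivots, filter_insert, hbelow_a, hpivots_t, coe_insert, Set.image_insert_eq]
    split_ifs with ha
    · rw [span_insert_eq_span ha, ih]
    · rw [card_insert_of_notMem hat, ← ih,
        finrank_span_insert_of_notMem (t.finite_toSet.image v) ha]

theorem add_notMem_pivots {ι R : Type*} [AddCommMonoid ι] [LinearOrder ι]
    [IsOrderedCancelAddMonoid ι] [CommRing R] [Algebra K R] {v : ι → R}
    (hv : ∀ a b, v (a + b) = v a * v b) {s t : Finset ι} {c : ι} (hst : ∀ b ∈ s, b + c ∈ t)
    {a : ι} (ha : a ∈ s) (hpiv : a ∉ pivots K s v) : a + c ∉ pivots K t v := by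
  rw [mem_pivots, not_and, not_not] at hpiv ⊢
  intro _
  have h := apply_mem_span_image_of_mem_span (LinearMap.mulRight K (v c)) (hpiv ha)
  rw [LinearMap.mulRight_apply, ← hv, Set.image_image] at h
  refine span_mono ?_ h
  rintro _ ⟨b, hb, rfl⟩
  rw [coe_filter, Set.mem_ofPred_eq] at hb
  exact ⟨b + c, by simp [hst b hb.1, hb.2], by rw [hv]; rfl⟩

end Pivots

section Tuples

variable {ι : Type*} [DecidableEq ι]

theorem sub_single_one_add_single_one {β : ι → ℕ} {j : ι} (hj : β j ≠ 0) :
    β - Pi.single j 1 + Pi.single j 1 = β := by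
  funext k
  by_cases hk : k = j
  · subst hk
    simp only [Pi.add_apply, Pi.sub_apply, Pi.single_eq_same]
    omega
  · simp [Pi.single_eq_of_ne hk]

theorem sum_add_single_one [Fintype ι] (α : ι → ℕ) (j : ι) :
    ∑ k, (α + Pi.single j 1 : ι → ℕ) k = ∑ k, α k + 1 := by
  simp [sum_add_distrib]

theorem succ_mul_card_le_of_sub_single_mem [Fintype ι] {q : ℕ} {G H : Finset (ι → ℕ)}
    (hG : ∀ β ∈ G, ∑ j, β j = q + 1) (hH : ∀ α ∈ H, ∑ j, α j = q)
    (hGH : ∀ β ∈ G, ∀ j, β j ≠ 0 → β - Pi.single j 1 ∈ H) :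
    (q + 1) * #G ≤ (q + Fintype.card ι) * #H := by
  -- each `β ∈ G` is counted `βⱼ` times in direction `j`, and each `α ∈ H` at most `αⱼ + 1` times
  have hcoord : ∀ j, ∑ β ∈ G, β j ≤ ∑ α ∈ H, (α j + 1) := fun j => by
    have hinj : Set.InjOn (· - Pi.single j 1) (G.filter (· j ≠ 0) : Set (ι → ℕ)) := by
      intro β hβ γ hγ h
      simp only [coe_filter, Set.mem_ofPred_eq] at hβ hγ
      rw [← sub_single_one_add_single_one hβ.2, ← sub_single_one_add_single_one hγ.2]
      exact congrArg (· + Pi.single j 1) h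
    calc ∑ β ∈ G, β j = ∑ β ∈ G with β j ≠ 0, β j := (sum_filter_ne_zero _).symm
      _ = ∑ β ∈ G with β j ≠ 0, ((β - Pi.single j 1 : ι → ℕ) j + 1) :=
          sum_congr rfl fun β hβ => by
            simp only [Pi.sub_apply, Pi.single_eq_same]
            have := (mem_filter.1 hβ).2
            omega
      _ = ∑ α ∈ {β ∈ G | β j ≠ 0}.image (· - Pi.single j 1), (α j + 1) :=
          (sum_image (f := fun α => α j + 1) hinj).symm
      _ ≤ ∑ α ∈ H, (α j + 1) := sum_le_sum_of_subset (image_subset_iff.2 fun β hβ =>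
          hGH β (mem_filter.1 hβ).1 j (mem_filter.1 hβ).2)
  calc (q + 1) * #G = ∑ β ∈ G, ∑ j, β j := by
        rw [sum_congr rfl hG, sum_const, smul_eq_mul, mul_comm]
    _ = ∑ j, ∑ β ∈ G, β j := sum_comm
    _ ≤ ∑ j, ∑ α ∈ H, (α j + 1) := sum_le_sum fun j _ => hcoord j
    _ = ∑ α ∈ H, (∑ j, α j + Fintype.card ι) := by
        simp only [sum_comm (s := univ), sum_add_distrib]
        simp
    _ = (q + Fintype.card ι) * #H := by
        rw [sum_congr rfl fun α hα => by rw [hH α hα], sum_const, smul_eq_mul, mul_comm]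

end Tuples

section Monomials

open Finset.Nat
open scoped Pointwise

variable {R : Type*} [CommMonoid R] {n : ℕ}

def tupleMonomial (x : Fin n → R) (α : Fin n → ℕ) : R := ∏ j, x j ^ α j

theorem tupleMonomial_zero (x : Fin n → R) : tupleMonomial x 0 = 1 := by
  simp [tupleMonomial]

theorem tupleMonomial_add (x : Fin n → R) (α β : Fin n → ℕ) :
    tupleMonomial x (α + β) = tupleMonomial x α * tupleMonomial x β := by
  simp only [tupleMonomial, Pi.add_apply, pow_add, prod_mul_distrib]

theorem tupleMonomial_single (x : Fin n → R) (j : Fin n) :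
    tupleMonomial x (Pi.single j 1) = x j := by
  rw [tupleMonomial, prod_eq_single j (fun k _ hk => by rw [Pi.single_eq_of_ne hk, pow_zero])
    (fun h => absurd (mem_univ j) h), Pi.single_eq_same, pow_one]

theorem range_mul_image_tupleMonomial (x : Fin n → R) (i : ℕ) :
    Set.range x * tupleMonomial x '' ↑(antidiagonalTuple n i) =
      tupleMonomial x '' ↑(antidiagonalTuple n (i + 1)) := by
  ext y
  simp only [Set.mem_mul, Set.mem_range, Set.mem_image, mem_coe, mem_antidiagonalTuple]
  constructor
  · rintro ⟨_, ⟨j, rfl⟩, _, ⟨α, hα, rfl⟩, rfl⟩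
    refine ⟨α + Pi.single j 1, by rw [sum_add_single_one, hα], ?_⟩
    rw [tupleMonomial_add, tupleMonomial_single, mul_comm]
  · rintro ⟨β, hβ, rfl⟩
    obtain ⟨j, hj⟩ : ∃ j, β j ≠ 0 := by
      by_contra! h
      simp [h] at hβ
    have hdeg := sum_add_single_one (β - Pi.single j 1) j
    rw [sub_single_one_add_single_one hj, hβ] at hdeg
    refine ⟨x j, ⟨j, rfl⟩, _, ⟨β - Pi.single j 1, by omega, rfl⟩, ?_⟩
    rw [← tupleMonomial_single x j, ← tupleMonomial_add, add_comm, sub_single_one_add_single_one hj]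

-- The exponents of degree `i`, carried to `Lex` so that `pivots` scans them in lex order.
def lexTuples (n i : ℕ) : Finset (Lex (Fin n → ℕ)) :=
  (antidiagonalTuple n i).map toLex.toEmbedding

theorem mem_lexTuples {i : ℕ} {a : Lex (Fin n → ℕ)} :
    a ∈ lexTuples n i ↔ ∑ j, ofLex a j = i := by
  rw [lexTuples, mem_map_equiv, mem_antidiagonalTuple]
  rfl

end Monomials

section Graded

open Finset.Nat

variable {K R : Type*} {n : ℕ}

theorem eq_span_image_tupleMonomial [CommSemiring K] [CommSemiring R] [Algebra K R]
    (𝒜 : ℕ → Submodule K R) (x : Fin n → R) (h0 : 𝒜 0 = K ∙ 1)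
    (h1 : 𝒜 1 = span K (Set.range x)) (hstd : ∀ i, 𝒜 1 * 𝒜 i = 𝒜 (i + 1)) (i : ℕ) :
    𝒜 i = span K (tupleMonomial x '' ↑(antidiagonalTuple n i)) := by
  induction i with
  | zero =>
    rw [h0, antidiagonalTuple_zero_right, coe_singleton, Set.image_singleton, tupleMonomial_zero]
  | succ i ih => rw [← hstd, ih, h1, span_mul_span, range_mul_image_tupleMonomial]

theorem eq_span_one_of_finrank_eq_one [Field K] [CommRing R] [Algebra K R]
    (𝒜 : ℕ → Submodule K R) [SetLike.GradedOne 𝒜] (h0 : finrank K (𝒜 0) = 1) :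
    𝒜 0 = K ∙ 1 := by
  have : FiniteDimensional K (𝒜 0) := Module.finite_of_finrank_pos (by omega)
  have hone : (1 : R) ≠ 0 := by
    intro h
    have : Subsingleton R := subsingleton_of_zero_eq_one h.symm
    simp [finrank_zero_of_subsingleton] at h0
  refine (eq_of_le_of_finrank_le ?_ ?_).symm
  · exact (span_singleton_le_iff_mem _ _).2 (SetLike.one_mem_graded 𝒜)
  · rw [h0, finrank_span_singleton hone]

variable (K) [Field K] [CommRing R] [Algebra K R]

noncomputable def standardExponents (x : Fin n → R) (i : ℕ) : Finset (Fin n → ℕ) :=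
  (pivots K (lexTuples n i) (tupleMonomial x ∘ ofLex)).map ofLex.toEmbedding

variable {K}

theorem mem_standardExponents {x : Fin n → R} {i : ℕ} {β : Fin n → ℕ} :
    β ∈ standardExponents K x i ↔
      toLex β ∈ pivots K (lexTuples n i) (tupleMonomial x ∘ ofLex) :=
  mem_map_equiv

theorem finrank_span_image_tupleMonomial (x : Fin n → R) (i : ℕ) :
    finrank K (span K (tupleMonomial x '' ↑(antidiagonalTuple n i))) =
      #(standardExponents K x i) := by
  rw [standardExponents, card_map, ← finrank_span_image_eq_card_pivots, lexTuples, coe_map,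
    ← Set.image_comp]
  rfl

theorem sum_eq_of_mem_standardExponents {x : Fin n → R} {i : ℕ} {β : Fin n → ℕ}
    (hβ : β ∈ standardExponents K x i) : ∑ j, β j = i :=
  mem_lexTuples.1 (mem_pivots.1 (mem_standardExponents.1 hβ)).1

theorem sub_single_mem_standardExponents {x : Fin n → R} {i : ℕ} {β : Fin n → ℕ}
    (hβ : β ∈ standardExponents K x (i + 1)) {j : Fin n} (hj : β j ≠ 0) :
    β - Pi.single j 1 ∈ standardExponents K x i := by
  obtain ⟨α, rfl⟩ : ∃ α : Fin n → ℕ, β = α + Pi.single j 1 :=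
    ⟨_, (sub_single_one_add_single_one hj).symm⟩
  have hα : ∑ k, α k = i := by
    have := sum_eq_of_mem_standardExponents hβ
    rw [sum_add_single_one] at this
    omega
  have hshift : ∀ b ∈ lexTuples n i, b + toLex (Pi.single j 1) ∈ lexTuples n (i + 1) := by
    intro b hb
    rw [mem_lexTuples] at hb ⊢
    exact (sum_add_single_one (ofLex b) j).trans (by rw [hb])
  rw [add_tsub_cancel_right, mem_standardExponents]
  rw [mem_standardExponents] at hβ
  by_contra h
  exact add_notMem_pivots (fun a b => tupleMonomial_add x (ofLex a) (ofLex b)) hshift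
    (mem_lexTuples.2 hα) h hβ

end Graded

theorem mul_le_mul_sum_range_of_succ_mul_le {g : ℕ → ℕ} {n : ℕ}
    (h : ∀ i, (i + 1) * g (i + 1) ≤ (i + n) * g i) (Q : ℕ) :
    Q * g Q ≤ n * ∑ i ∈ range Q, g i := by
  induction Q with
  | zero => simp
  | succ Q ih =>
    calc (Q + 1) * g (Q + 1) ≤ Q * g Q + n * g Q := (h Q).trans_eq (add_mul _ _ _)
      _ ≤ n * ∑ i ∈ range Q, g i + n * g Q := by gcongr
      _ = n * ∑ i ∈ range (Q + 1), g i := by rw [sum_range_succ, mul_add]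

theorem hilbert_average_general (K : Type*) [Field K] (R : Type*) [CommRing R] [Algebra K R]
    (𝒜 : ℕ → Submodule K R) [GradedAlgebra 𝒜]
    (hstd : ∀ i, 𝒜 1 * 𝒜 i = 𝒜 (i + 1))
    (hfin : ∀ i, Module.Finite K (𝒜 i))
    (h0 : Module.finrank K (𝒜 0) = 1)
    (q : ℕ) :
    q * Module.finrank K (𝒜 q) ≤
      Module.finrank K (𝒜 1) *
        (1 + ∑ i ∈ Finset.Ico 1 q, Module.finrank K (𝒜 i)) := by
  have : Module.Finite K (𝒜 1) := hfin 1
  let b := Module.finBasis K (𝒜 1)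
  let x := fun j => (b j : R)
  have hx : 𝒜 1 = span K (Set.range x) := by
    rw [show Set.range x = (𝒜 1).subtype '' Set.range b from Set.range_comp _ _, ← map_span,
      b.span_eq, map_subtype_top]
  have hdim : ∀ i, finrank K (𝒜 i) = #(standardExponents K x i) := fun i => by
    rw [eq_span_image_tupleMonomial 𝒜 x (eq_span_one_of_finrank_eq_one 𝒜 h0) hx hstd i,
      finrank_span_image_tupleMonomial]
  have hgrowth : ∀ i,
      (i + 1) * finrank K (𝒜 (i + 1)) ≤ (i + finrank K (𝒜 1)) * finrank K (𝒜 i) := fun i => by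
    have := succ_mul_card_le_of_sub_single_mem (G := standardExponents K x (i + 1))
      (H := standardExponents K x i) (fun β => sum_eq_of_mem_standardExponents)
      (fun α => sum_eq_of_mem_standardExponents) (fun β hβ j => sub_single_mem_standardExponents hβ)
    rwa [Fintype.card_fin, ← hdim, ← hdim] at this
  calc q * finrank K (𝒜 q) ≤ finrank K (𝒜 1) * ∑ i ∈ range q, finrank K (𝒜 i) :=
        mul_le_mul_sum_range_of_succ_mul_le (g := fun i => finrank K (𝒜 i)) hgrowth q
    _ ≤ _ := by
      gcongr
      rcases q with _ | q
      · simp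
      · rw [range_eq_Ico, sum_eq_sum_Ico_succ_bot q.succ_pos, h0]

/-- Averaging the Hilbert function of a standard graded algebra:
`q·h_q ≤ h_1·(1 + h_1 + ⋯ + h_{q−1})`. -/
theorem hilbert_average (K : Type*) [Field K] (R : Type*) [CommRing R] [Algebra K R]
    (𝒜 : ℕ → Submodule K R) [GradedAlgebra 𝒜]
    (hstd : ∀ i, 𝒜 1 * 𝒜 i = 𝒜 (i + 1))
    (hfin : ∀ i, Module.Finite K (𝒜 i))
    (h0 : Module.finrank K (𝒜 0) = 1)
    (q : ℕ) (hq : 1 ≤ q) :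
    q * Module.finrank K (𝒜 q) ≤
      Module.finrank K (𝒜 1) *
        (1 + ∑ i ∈ Finset.Ico 1 q, Module.finrank K (𝒜 i)) :=
  hilbert_average_general K R 𝒜 hstd hfin h0 q
end

section
/- Let S be a numerical semigroup with q = ⌈c/m⌉, ρ = qm−c, and S_j = S ∩ [jm−ρ,(j+1)m−ρ). If S_i + S_j = S_{i+j} for all i, j ≥ 1 with i + j ≤ q−1, then e(S)·|L(S)| ≥ c, i.e., S satisfies Wilf's conjecture. -/
/-!
Let `A = S_1`. The grading forces `S_j = jA` (the `j`-fold sumset) for `1 ≤ j ≤ q − 1`. Hence the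
sets `jA`, `j < q`, are disjoint nonempty pieces of `L`, so `q ≤ Σ_{j<q} |jA| ≤ |L|`, and every
decomposable element of `[c, c + m)` lies in `qA`. The elements of `A` and the non-decomposable
elements `H` of `[c, c + m)` are primitive, so with the Macaulay-type bound
`q |qA| ≤ |A| Σ_{j<q} |jA|`,
  `c ≤ qm ≤ q |H| + q |qA| ≤ |L| |H| + |A| |L| ≤ e(S) |L|`.
The Macaulay-type bound holds for every finite `A ⊆ ℕ`: in the greedy representation of an element
of `(k + 1)A` (always split off the largest possible summand), deleting any summand leaves the
greedy representation of the rest, and double counting gives `(k + 1) |(k + 1)A| ≤ (k + |A|) |kA|`.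
-/

open Pointwise Finset

section GreedyRepresentation

variable {A : Finset ℕ}

def firstSummands (A : Finset ℕ) (k x : ℕ) : Finset ℕ :=
  {a ∈ A | a ≤ x ∧ x - a ∈ k • A}

@[simp]
theorem mem_firstSummands {k x a : ℕ} :
    a ∈ firstSummands A k x ↔ a ∈ A ∧ a ≤ x ∧ x - a ∈ k • A :=
  mem_filter

theorem firstSummands_sub_subset {k x d : ℕ} (hd : d ∈ A) (hdx : d ≤ x) :
    firstSummands A k (x - d) ⊆ firstSummands A (k + 1) x := by
  intro a ha
  obtain ⟨haA, hax, hrest⟩ := mem_firstSummands.1 ha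
  refine mem_firstSummands.2 ⟨haA, by omega, ?_⟩
  rw [succ_nsmul, show x - a = x - d - a + d by omega]
  exact add_mem_add hrest hd

def greedyRep (A : Finset ℕ) : ℕ → ℕ → Multiset ℕ
  | 0, _ => 0
  | k + 1, x =>
    if h : (firstSummands A k x).Nonempty then
      (firstSummands A k x).max' h ::ₘ greedyRep A k (x - (firstSummands A k x).max' h)
    else 0

theorem greedyRep_succ_of_nonempty {k x : ℕ} (h : (firstSummands A k x).Nonempty) :
    ∃ e, IsGreatest ↑(firstSummands A k x) e ∧
      greedyRep A (k + 1) x = e ::ₘ greedyRep A k (x - e) :=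
  ⟨_, isGreatest_max' _ h, by rw [greedyRep, dif_pos h]⟩

theorem greedyRep_succ_of_isGreatest {k x e : ℕ} (he : IsGreatest ↑(firstSummands A k x) e) :
    greedyRep A (k + 1) x = e ::ₘ greedyRep A k (x - e) := by
  obtain ⟨e', he', hrep⟩ := greedyRep_succ_of_nonempty ⟨e, he.1⟩
  rwa [he'.unique he] at hrep

theorem mem_of_mem_greedyRep {k x a : ℕ} (ha : a ∈ greedyRep A k x) : a ∈ A := by
  induction k generalizing x with
  | zero => simp [greedyRep] at ha
  | succ k ih =>
    by_cases h : (firstSummands A k x).Nonempty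
    · obtain ⟨e, he, hrep⟩ := greedyRep_succ_of_nonempty h
      rw [hrep, Multiset.mem_cons] at ha
      rcases ha with rfl | ha
      · exact (mem_firstSummands.1 he.1).1
      · exact ih ha
    · simp [greedyRep, h] at ha

theorem card_greedyRep {k x : ℕ} (hx : x ∈ k • A) : Multiset.card (greedyRep A k x) = k := by
  induction k generalizing x with
  | zero => rfl
  | succ k ih =>
    rw [succ_nsmul, mem_add] at hx
    obtain ⟨y, hy, a, ha, rfl⟩ := hx
    obtain ⟨e, he, hrep⟩ :=
      greedyRep_succ_of_nonempty (k := k) (x := y + a)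
        ⟨a, mem_firstSummands.2 ⟨ha, by omega, by simpa⟩⟩
    rw [hrep, Multiset.card_cons, ih (mem_firstSummands.1 he.1).2.2]

/-- If the largest summand `e` of `x` is not the one removed, it is still the largest first summand
of `x - d`, because every first summand of `x - d` is one of `x`. -/
theorem greedyRep_sub_eq_erase : ∀ {k x d : ℕ}, d ∈ greedyRep A (k + 1) x →
    d ∈ firstSummands A k x ∧ greedyRep A k (x - d) = (greedyRep A (k + 1) x).erase d
  | k, x, d, hd => by
    have h : (firstSummands A k x).Nonempty := by
      by_contra h
      simp [greedyRep, h] at hd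
    obtain ⟨e, he, hrep⟩ := greedyRep_succ_of_nonempty h
    rw [hrep] at hd ⊢
    rcases eq_or_ne d e with rfl | hde
    · exact ⟨he.1, (Multiset.erase_cons_head _ _).symm⟩
    have hd' : d ∈ greedyRep A k (x - e) := (Multiset.mem_cons.1 hd).resolve_left hde
    cases k with
    | zero => simp [greedyRep] at hd'
    | succ k =>
      obtain ⟨heA, hex, -⟩ := mem_firstSummands.1 he.1
      obtain ⟨hdsum, hrep'⟩ := greedyRep_sub_eq_erase hd'
      obtain ⟨hdA, hdx, hxed⟩ := mem_firstSummands.1 hdsum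
      have hsub := firstSummands_sub_subset (k := k) hdA (show d ≤ x by omega)
      refine ⟨firstSummands_sub_subset heA hex hdsum, ?_⟩
      have he' : IsGreatest ↑(firstSummands A k (x - d)) e :=
        ⟨mem_firstSummands.2 ⟨heA, by omega, by rwa [Nat.sub_right_comm]⟩,
          fun f hf => he.2 (hsub hf)⟩
      rw [greedyRep_succ_of_isGreatest he', Nat.sub_right_comm, hrep',
        Multiset.erase_cons_tail _ hde.symm]

theorem count_greedyRep_succ_add_le (k y e : ℕ) :
    (greedyRep A (k + 1) (y + e)).count e ≤ (greedyRep A k y).count e + 1 := by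
  by_cases he : e ∈ greedyRep A (k + 1) (y + e)
  · have h := (greedyRep_sub_eq_erase he).2
    rw [Nat.add_sub_cancel] at h
    rw [h, Multiset.count_erase_self]
    omega
  · simp [Multiset.count_eq_zero_of_notMem he]

theorem sum_count_greedyRep_succ_le (k e : ℕ) :
    ∑ x ∈ (k + 1) • A, (greedyRep A (k + 1) x).count e ≤
      ∑ y ∈ k • A, ((greedyRep A k y).count e + 1) :=
  calc ∑ x ∈ (k + 1) • A, (greedyRep A (k + 1) x).count e
      ≤ ∑ x ∈ (k • A).image (· + e), (greedyRep A (k + 1) x).count e :=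
        sum_le_sum_of_ne_zero fun x _ hx => by
          obtain ⟨-, hex, hxe⟩ :=
            mem_firstSummands.1 (greedyRep_sub_eq_erase (Multiset.count_ne_zero.1 hx)).1
          exact mem_image.2 ⟨x - e, hxe, by omega⟩
    _ = ∑ y ∈ k • A, (greedyRep A (k + 1) (y + e)).count e :=
        sum_image fun _ _ _ _ => add_right_cancel
    _ ≤ ∑ y ∈ k • A, ((greedyRep A k y).count e + 1) :=
        sum_le_sum fun y _ => count_greedyRep_succ_add_le k y e

/-- Double count pairs (element of `(k + 1) • A`, summand of its greedy representation). -/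
theorem succ_mul_card_succ_nsmul_le (k : ℕ) :
    (k + 1) * #((k + 1) • A) ≤ (k + #A) * #(k • A) := by
  have hcount : ∀ j, ∀ x ∈ j • A, ∑ e ∈ A, (greedyRep A j x).count e = j := fun j x hx => by
    rw [Multiset.sum_count_eq_card fun _ => mem_of_mem_greedyRep, card_greedyRep hx]
  calc (k + 1) * #((k + 1) • A)
      = ∑ x ∈ (k + 1) • A, ∑ e ∈ A, (greedyRep A (k + 1) x).count e := by
        rw [sum_congr rfl (hcount (k + 1)), sum_const, smul_eq_mul, mul_comm]
    _ = ∑ e ∈ A, ∑ x ∈ (k + 1) • A, (greedyRep A (k + 1) x).count e := sum_comm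
    _ ≤ ∑ e ∈ A, ∑ y ∈ k • A, ((greedyRep A k y).count e + 1) :=
        sum_le_sum fun e _ => sum_count_greedyRep_succ_le k e
    _ = ∑ y ∈ k • A, ∑ e ∈ A, ((greedyRep A k y).count e + 1) := sum_comm
    _ = (k + #A) * #(k • A) := by
        rw [sum_congr rfl fun y hy => by rw [sum_add_distrib, hcount k y hy, sum_const,
          smul_eq_mul, mul_one], sum_const, smul_eq_mul, mul_comm]

theorem mul_card_nsmul_le_card_mul_sum (k : ℕ) :
    k * #(k • A) ≤ #A * ∑ j ∈ range k, #(j • A) := by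
  induction k with
  | zero => simp
  | succ k ih =>
    have h := succ_mul_card_succ_nsmul_le (A := A) k
    rw [sum_range_succ, mul_add]
    linarith

theorem mul_le_of_mem_nsmul {m k x : ℕ} (hA : ∀ a ∈ A, m ≤ a) (hx : x ∈ k • A) : k * m ≤ x := by
  induction k generalizing x with
  | zero => simp
  | succ k ih =>
    rw [succ_nsmul, mem_add] at hx
    obtain ⟨y, hy, a, ha, rfl⟩ := hx
    rw [add_mul, one_mul]
    exact add_le_add (ih hy) (hA a ha)

end GreedyRepresentation

theorem nsmul_eq_of_add_one_eq {M : Type*} [AddMonoid M] {T : ℕ → M} {n : ℕ}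
    (h : ∀ i, 1 ≤ i → i + 1 ≤ n → T i + T 1 = T (i + 1)) {j : ℕ} (hj : 1 ≤ j) (hjn : j ≤ n) :
    j • T 1 = T j := by
  induction j, hj using Nat.le_induction with
  | base => exact one_nsmul _
  | succ j hj ih => rw [succ_nsmul, ih (by omega), h j hj hjn]

section NumericalSemigroup

variable {S : Set ℕ} {m c q ρ : ℕ}

def IsDecomposable (S : Set ℕ) (x : ℕ) : Prop :=
  ∃ y ∈ S, ∃ z ∈ S, y ≠ 0 ∧ z ≠ 0 ∧ x = y + z

def primitives (S : Set ℕ) : Set ℕ :=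
  {x | x ∈ S ∧ x ≠ 0 ∧ ¬ IsDecomposable S x}

def block (S : Set ℕ) (m ρ j : ℕ) : Set ℕ :=
  S ∩ Set.Ico (j * m - ρ) ((j + 1) * m - ρ)

theorem mem_of_sSup_compl_lt (hSfin : Sᶜ.Finite) {n : ℕ} (hn : sSup Sᶜ < n) : n ∈ S := by
  by_contra h
  exact hn.not_ge (le_csSup hSfin.bddAbove h)

theorem nonempty_of_finite_compl (hSfin : Sᶜ.Finite) : {n | n ∈ S ∧ n ≠ 0}.Nonempty :=
  ⟨sSup Sᶜ + 1, mem_of_sSup_compl_lt hSfin (lt_add_one _), by omega⟩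

/-- Thanks to truncated subtraction this also holds for `j = 0`, with the block `[0, m − ρ)`. -/
theorem mem_block_iff (hm : 0 < m) {j x : ℕ} :
    x ∈ block S m ρ j ↔ x ∈ S ∧ (x + ρ) / m = j := by
  rw [block, Set.mem_inter_iff, Set.mem_Ico, Nat.sub_le_iff_le_add, Nat.lt_sub_iff_add_lt,
    Nat.div_eq_iff hm, add_one_mul]
  exact and_congr_right fun _ => by omega

theorem not_isDecomposable_of_lt (hmin : ∀ s ∈ S, s ≠ 0 → m ≤ s) {x : ℕ} (hx : x < 2 * m) :
    ¬ IsDecomposable S x := by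
  rintro ⟨y, hy, z, hz, hy0, hz0, rfl⟩
  have := hmin y hy hy0
  have := hmin z hz hz0
  omega

theorem finite_primitives (hmS : m ∈ S) (hm : m ≠ 0) (hcS : ∀ n, c ≤ n → n ∈ S) (hc0 : 0 < c) :
    (primitives S).Finite := by
  refine (Set.finite_Iio (c + m)).subset fun x ⟨_, _, hx⟩ => Set.mem_Iio.2 ?_
  by_contra! hxc
  exact hx ⟨m, hmS, x - m, hcS _ (by omega), hm, by omega, by omega⟩

theorem wilf_of_conductor_le_multiplicity (hS0 : 0 ∈ S) (hmin : ∀ s ∈ S, s ≠ 0 → m ≤ s)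
    (hcS : ∀ n, c ≤ n → n ∈ S) (hfin : (primitives S).Finite) (hc0 : 0 < c) (hcm : c ≤ m) :
    c ≤ (primitives S).ncard * (S ∩ Set.Ico 0 c).ncard := by
  have hP : m ≤ (primitives S).ncard := by
    have hsub : ↑(Ico c (c + m)) ⊆ primitives S := fun x hx => by
      rw [coe_Ico, Set.mem_Ico] at hx
      exact ⟨hcS x hx.1, by omega, not_isDecomposable_of_lt hmin (by omega)⟩
    simpa using Set.ncard_le_ncard hsub hfin
  have hL : 1 ≤ (S ∩ Set.Ico 0 c).ncard :=
    (Set.ncard_pos ((Set.finite_Ico 0 c).subset Set.inter_subset_right)).2 ⟨0, hS0, by simpa⟩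
  calc c ≤ m * 1 := by omega
    _ ≤ _ := Nat.mul_le_mul hP hL

section Graded

variable {A : Finset ℕ}

theorem mem_block_of_mem_nsmul (hS0 : 0 ∈ S) (hρ : ρ < m)
    (hpow : ∀ j, 1 ≤ j → j ≤ q - 1 → ↑(j • A) = block S m ρ j)
    {j x : ℕ} (hj : j < q) (hx : x ∈ j • A) : x ∈ block S m ρ j := by
  rcases Nat.eq_zero_or_pos j with rfl | hj1
  · obtain rfl : x = 0 := by simpa using hx
    exact ⟨hS0, by simp, by simpa⟩
  · rw [← hpow j hj1 (by omega)]
    exact hx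

theorem sum_card_nsmul_le_ncard (hS0 : 0 ∈ S) (hm : 0 < m) (hρ : ρ < m) (hq : c + ρ = q * m)
    (hpow : ∀ j, 1 ≤ j → j ≤ q - 1 → ↑(j • A) = block S m ρ j) :
    ∑ j ∈ range q, #(j • A) ≤ (S ∩ Set.Ico 0 c).ncard := by
  have hmem : ∀ {j x}, j < q → x ∈ j • A → x ∈ S ∧ (x + ρ) / m = j :=
    fun hj hx => (mem_block_iff hm).1 (mem_block_of_mem_nsmul hS0 hρ hpow hj hx)
  have hdisj : (↑(range q) : Set ℕ).PairwiseDisjoint (· • A) := fun i hi j hj hij =>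
    disjoint_left.2 fun x hxi hxj =>
      hij ((hmem (mem_range.1 hi) hxi).2.symm.trans (hmem (mem_range.1 hj) hxj).2)
  have hsub : ↑((range q).biUnion (· • A)) ⊆ S ∩ Set.Ico 0 c := fun x hx => by
    obtain ⟨j, hj, hx⟩ := mem_biUnion.1 hx
    obtain ⟨hxS, hxj⟩ := hmem (mem_range.1 hj) hx
    have := (Nat.div_lt_iff_lt_mul hm).1 (hxj.trans_lt (mem_range.1 hj))
    exact ⟨hxS, Nat.zero_le x, by omega⟩
  rw [← card_biUnion hdisj, ← Set.ncard_coe_finset]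
  exact Set.ncard_le_ncard hsub ((Set.finite_Ico 0 c).subset Set.inter_subset_right)

theorem mem_nsmul_of_isDecomposable (hmin : ∀ s ∈ S, s ≠ 0 → m ≤ s) (hm : 0 < m)
    (hq : c + ρ = q * m) (hAm : ∀ a ∈ A, m ≤ a)
    (hpow : ∀ j, 1 ≤ j → j ≤ q - 1 → ↑(j • A) = block S m ρ j)
    {x : ℕ} (hcx : c ≤ x) (hxm : x < c + m) (hx : IsDecomposable S x) : x ∈ q • A := by
  have hblock : ∀ y ∈ S, y ≠ 0 → y < c → y ∈ ((y + ρ) / m) • A ∧ 1 ≤ (y + ρ) / m := by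
    intro y hyS hy0 hyc
    have hmy := hmin y hyS hy0
    have h1 : 1 ≤ (y + ρ) / m := (Nat.le_div_iff_mul_le hm).2 (by omega)
    have h2 : (y + ρ) / m < q := (Nat.div_lt_iff_lt_mul hm).2 (by omega)
    refine ⟨?_, h1⟩
    rw [← mem_coe, hpow _ h1 (by omega), mem_block_iff hm]
    exact ⟨hyS, rfl⟩
  obtain ⟨y, hyS, z, hzS, hy0, hz0, rfl⟩ := hx
  have := hmin y hyS hy0
  have := hmin z hzS hz0
  obtain ⟨hy, hi⟩ := hblock y hyS hy0 (by omega)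
  obtain ⟨hz, hj⟩ := hblock z hzS hz0 (by omega)
  set i := (y + ρ) / m
  set j := (z + ρ) / m
  have hyz : y + z ∈ (i + j) • A := by
    rw [add_nsmul]
    exact add_mem_add hy hz
  have hle : i + j ≤ q := by
    have := mul_le_of_mem_nsmul hAm hyz
    have : (i + j) * m < (q + 1) * m := by rw [add_one_mul]; omega
    exact Nat.lt_succ_iff.1 (Nat.lt_of_mul_lt_mul_right this)
  obtain rfl : i + j = q := by
    by_contra hne
    have hxS := (mem_block_iff hm).1 (hpow (i + j) (by omega) (by omega) ▸ mem_coe.2 hyz)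
    have := (Nat.div_lt_iff_lt_mul hm).1 (hxS.2.trans_lt (show i + j < q by omega))
    omega
  exact hyz

open scoped Classical in
theorem le_card_add_card_nsmul (hmin : ∀ s ∈ S, s ≠ 0 → m ≤ s) (hm : 0 < m)
    (hq : c + ρ = q * m) (hAm : ∀ a ∈ A, m ≤ a)
    (hpow : ∀ j, 1 ≤ j → j ≤ q - 1 → ↑(j • A) = block S m ρ j) :
    m ≤ #{x ∈ Ico c (c + m) | ¬ IsDecomposable S x} + #(q • A) :=
  calc m = #(Ico c (c + m)) := by simp
    _ ≤ #({x ∈ Ico c (c + m) | ¬ IsDecomposable S x} ∪ q • A) := card_le_card fun x hx => by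
        by_cases hd : IsDecomposable S x
        · obtain ⟨hcx, hxm⟩ := mem_Ico.1 hx
          exact mem_union_right _ (mem_nsmul_of_isDecomposable hmin hm hq hAm hpow hcx hxm hd)
        · exact mem_union_left _ (mem_filter.2 ⟨hx, hd⟩)
    _ ≤ _ := card_union_le _ _

open scoped Classical in
theorem card_add_card_le_ncard_primitives (hcS : ∀ n, c ≤ n → n ∈ S) (hc0 : 0 < c)
    (hfin : (primitives S).Finite) (hAP : ↑A ⊆ primitives S) (hAc : ∀ a ∈ A, a < c) :
    #A + #{x ∈ Ico c (c + m) | ¬ IsDecomposable S x} ≤ (primitives S).ncard := by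
  have hdisj : Disjoint A {x ∈ Ico c (c + m) | ¬ IsDecomposable S x} :=
    disjoint_left.2 fun x hxA hx => (hAc x hxA).not_ge (mem_Ico.1 (mem_filter.1 hx).1).1
  rw [← card_union_of_disjoint hdisj, ← Set.ncard_coe_finset]
  refine Set.ncard_le_ncard (fun x hx => ?_) hfin
  rcases mem_union.1 hx with hxA | hxH
  · exact hAP hxA
  · obtain ⟨hx, hd⟩ := mem_filter.1 hxH
    have hcx := (mem_Ico.1 hx).1
    exact ⟨hcS x hcx, by omega, hd⟩

open scoped Classical in
theorem wilf_of_nsmul_eq_block (hS0 : 0 ∈ S) (hmS : m ∈ S) (hmin : ∀ s ∈ S, s ≠ 0 → m ≤ s)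
    (hcS : ∀ n, c ≤ n → n ∈ S) (hfin : (primitives S).Finite) (hm : 0 < m) (hρ : ρ < m)
    (hq : c + ρ = q * m) (hmc : m < c)
    (hpow : ∀ j, 1 ≤ j → j ≤ q - 1 → ↑(j • A) = block S m ρ j) :
    c ≤ (primitives S).ncard * (S ∩ Set.Ico 0 c).ncard := by
  have hq2 : 2 ≤ q := by
    by_contra! h
    interval_cases q <;> omega
  have hA : ∀ a, a ∈ A ↔ a ∈ S ∧ (a + ρ) / m = 1 := fun a => by
    rw [← mem_block_iff hm, ← hpow 1 le_rfl (by omega), one_nsmul, mem_coe]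
  have hAm : ∀ a ∈ A, m ≤ a ∧ a + ρ < 2 * m := fun a ha => by
    obtain ⟨haS, ha⟩ := (hA a).1 ha
    have := (Nat.div_eq_iff hm).1 ha
    have := hmin a haS (by omega)
    omega
  have hm1 : (m + ρ) / m = 1 := (Nat.div_eq_iff hm).2 ⟨by omega, by omega⟩
  have h2m : 2 * m ≤ q * m := Nat.mul_le_mul_right m hq2
  set H := {x ∈ Ico c (c + m) | ¬ IsDecomposable S x}
  set L := (S ∩ Set.Ico 0 c).ncard
  have hL : ∑ j ∈ range q, #(j • A) ≤ L := sum_card_nsmul_le_ncard hS0 hm hρ hq hpow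
  have hqL : q ≤ L := calc
    q = ∑ j ∈ range q, 1 := by simp
    _ ≤ ∑ j ∈ range q, #(j • A) :=
        sum_le_sum fun j _ => (Nonempty.nsmul ⟨m, (hA m).2 ⟨hmS, hm1⟩⟩).card_pos
    _ ≤ L := hL
  have hmH : m ≤ #H + #(q • A) :=
    le_card_add_card_nsmul hmin hm hq (fun a ha => (hAm a ha).1) hpow
  have hP : #A + #H ≤ (primitives S).ncard :=
    card_add_card_le_ncard_primitives hcS (by omega) hfin
      (fun a ha => ⟨((hA a).1 ha).1, by have := hAm a ha; omega,
        not_isDecomposable_of_lt hmin (by have := hAm a ha; omega)⟩)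
      (fun a ha => by have := hAm a ha; omega)
  have hmac : q * #(q • A) ≤ #A * L :=
    (mul_card_nsmul_le_card_mul_sum q).trans (Nat.mul_le_mul_left _ hL)
  calc c ≤ q * m := by omega
    _ ≤ q * #H + q * #(q • A) := by rw [← mul_add]; exact Nat.mul_le_mul_left q hmH
    _ ≤ L * #H + #A * L := add_le_add (Nat.mul_le_mul_right _ hqL) hmac
    _ = (#A + #H) * L := by ring
    _ ≤ (primitives S).ncard * L := Nat.mul_le_mul_right _ hP

end Graded

end NumericalSemigroup

theorem wilf_true_grading_general (S : Set ℕ) (m c q ρ : ℕ)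
    (hS0 : 0 ∈ S)
    (hSfin : (Sᶜ : Set ℕ).Finite)
    (hm : m = sInf {n : ℕ | n ∈ S ∧ n ≠ 0})
    (hc : c = sSup (Sᶜ : Set ℕ) + 1)
    (hq : c + ρ = q * m) (hρ : ρ < m)
    (Sj : ℕ → Set ℕ)
    (hSj : ∀ j, Sj j = S ∩ Set.Ico (j * m - ρ) ((j + 1) * m - ρ))
    (hgrade : ∀ i j, 1 ≤ i → 1 ≤ j → i + j ≤ q - 1 → Sj i + Sj j = Sj (i + j))
    (P L : Set ℕ)
    (hP : P = {x : ℕ | x ∈ S ∧ x ≠ 0 ∧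
      ¬ ∃ y ∈ S, ∃ z ∈ S, y ≠ 0 ∧ z ≠ 0 ∧ x = y + z})
    (hL : L = S ∩ Set.Ico 0 c) :
    c ≤ P.ncard * L.ncard := by
  obtain rfl : Sj = block S m ρ := funext hSj
  obtain rfl : P = primitives S := hP
  subst hL
  obtain ⟨hmS, hm0⟩ : m ∈ S ∧ m ≠ 0 := hm ▸ Nat.sInf_mem (nonempty_of_finite_compl hSfin)
  have hmin : ∀ s ∈ S, s ≠ 0 → m ≤ s := fun s hs hs0 => hm ▸ Nat.sInf_le ⟨hs, hs0⟩
  have hcS : ∀ n, c ≤ n → n ∈ S := fun n hn => mem_of_sSup_compl_lt hSfin (by omega)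
  have hfin := finite_primitives hmS hm0 hcS (by omega)
  rcases le_or_gt c m with hcm | hmc
  · exact wilf_of_conductor_le_multiplicity hS0 hmin hcS hfin (by omega) hcm
  obtain ⟨A, hA⟩ : ∃ A : Finset ℕ, ↑A = block S m ρ 1 :=
    ((Set.finite_Ico _ _).subset Set.inter_subset_right).exists_finset_coe
  refine wilf_of_nsmul_eq_block (A := A) hS0 hmS hmin hcS hfin (Nat.pos_of_ne_zero hm0) hρ hq
    hmc fun j hj hjq => ?_
  rw [coe_nsmul, hA, nsmul_eq_of_add_one_eq (fun i hi hin => hgrade i 1 hi le_rfl hin) hj hjq]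

/-- If `S_i + S_j = S_{i+j}` for all `i, j ≥ 1` with `i + j ≤ q − 1`, then `S`
satisfies Wilf's conjecture. -/
theorem wilf_true_grading (S : Set ℕ) (m c q ρ : ℕ)
    (hS0 : 0 ∈ S) (hSadd : ∀ a ∈ S, ∀ b ∈ S, a + b ∈ S)
    (hSfin : (Sᶜ : Set ℕ).Finite)
    (hm : m = sInf {n : ℕ | n ∈ S ∧ n ≠ 0})
    (hc : c = sSup (Sᶜ : Set ℕ) + 1)
    (hq : c + ρ = q * m) (hρ : ρ < m)
    (Sj : ℕ → Set ℕ)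
    (hSj : ∀ j, Sj j = S ∩ Set.Ico (j * m - ρ) ((j + 1) * m - ρ))
    (hgrade : ∀ i j, 1 ≤ i → 1 ≤ j → i + j ≤ q - 1 → Sj i + Sj j = Sj (i + j))
    (P L : Set ℕ)
    (hP : P = {x : ℕ | x ∈ S ∧ x ≠ 0 ∧
      ¬ ∃ y ∈ S, ∃ z ∈ S, y ≠ 0 ∧ z ≠ 0 ∧ x = y + z})
    (hL : L = S ∩ Set.Ico 0 c) :
    c ≤ P.ncard * L.ncard :=
  wilf_true_grading_general S m c q ρ hS0 hSfin hm hc hq hρ Sj hSj hgrade P L hP hL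
end

section
/- Let S be a numerical semigroup such that all primitive elements of S smaller than the conductor c have a common divisor k ≥ 2. Then the number of decomposable elements of S in [c, c+m) is at most m/k, hence e(S) ≥ m − m/k ≥ m/2, and S satisfies Wilf's conjecture (given Sammartano's result that e ≥ m/2 implies Wilf's conjecture). -/
/-- If all left primitives of `S` have a common divisor `k ≥ 2`, then the number of
decomposables in `[c, c+m)` is at most `m/k`, hence `e(S) ≥ m − m/k ≥ m/2`, and `S`
satisfies Wilf's conjecture (given Sammartano's theorem as a hypothesis). -/
theorem wilf_gcd_left (S : Set ℕ) (m c k : ℕ)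
    (hS0 : 0 ∈ S) (hSadd : ∀ a ∈ S, ∀ b ∈ S, a + b ∈ S)
    (hSfin : (Sᶜ : Set ℕ).Finite)
    (hm : m = sInf {n : ℕ | n ∈ S ∧ n ≠ 0})
    (hc : c = sSup (Sᶜ : Set ℕ) + 1)
    (P D L : Set ℕ)
    (hD : D = {x : ℕ | ∃ y ∈ S, ∃ z ∈ S, y ≠ 0 ∧ z ≠ 0 ∧ x = y + z})
    (hP : P = {x : ℕ | x ∈ S ∧ x ≠ 0} \ D)
    (hL : L = S ∩ Set.Ico 0 c)
    (hk : 2 ≤ k) (hdvd : ∀ x ∈ P ∩ L, k ∣ x)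
    (hSammartano : m ≤ 2 * P.ncard → c ≤ P.ncard * L.ncard) :
    (D ∩ Set.Ico c (c + m)).ncard ≤ m / k ∧
    m - m / k ≤ P.ncard ∧ m / 2 ≤ m - m / k ∧
    c ≤ P.ncard * L.ncard := by
  have hk0 : 0 < k := by omega
  have hc1 : 1 ≤ c := by omega
  have hge : ∀ n, c ≤ n → n ∈ S := by
    intro n hn
    by_contra h
    have : n ≤ sSup (Sᶜ : Set ℕ) := le_csSup hSfin.bddAbove h
    omega
  have hmS : m ∈ S ∧ m ≠ 0 := by
    have hne : {n : ℕ | n ∈ S ∧ n ≠ 0}.Nonempty := ⟨c, hge c le_rfl, by omega⟩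
    rw [hm]; exact Nat.sInf_mem hne
  have hmin : ∀ n, n ∈ S → n ≠ 0 → m ≤ n := by
    intro n h1 h2
    rw [hm]; exact Nat.sInf_le ⟨h1, h2⟩
  have hm1 : 1 ≤ m := by
    have := hmS.2; omega
  have key : ∀ w, w ∈ S → w ≠ 0 → w < c → k ∣ w := by
    intro w
    induction w using Nat.strong_induction_on with
    | _ w ih =>
      intro hwS hw0 hwc
      by_cases hwD : w ∈ D
      · rw [hD] at hwD
        obtain ⟨y, hy, z, hz, hy0, hz0, hw⟩ := hwD
        have h1 : k ∣ y := ih y (by omega) hy hy0 (by omega)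
        have h2 : k ∣ z := ih z (by omega) hz hz0 (by omega)
        rw [hw]; exact Nat.dvd_add h1 h2
      · apply hdvd
        constructor
        · rw [hP]; exact ⟨⟨hwS, hw0⟩, hwD⟩
        · rw [hL]; exact ⟨hwS, ⟨Nat.zero_le _, hwc⟩⟩
  have hDcount : (D ∩ Set.Ico c (c + m)).ncard ≤ m / k := by
    rcases le_or_gt c m with hcm | hmc
    · have hemp : D ∩ Set.Ico c (c + m) = ∅ := by
        ext x
        simp only [Set.mem_inter_iff, Set.mem_Ico, Set.mem_empty_iff_false, iff_false, not_and]
        intro hxD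
        rw [hD] at hxD
        obtain ⟨y, hy, z, hz, hy0, hz0, hxe⟩ := hxD
        have := hmin y hy hy0
        have := hmin z hz hz0
        omega
      simp [hemp]
    · have hkm : k ∣ m := key m hmS.1 hmS.2 hmc
      have hsub : D ∩ Set.Ico c (c + m) ⊆
          ↑((Finset.Ico c (c + m)).filter (fun x => k ∣ x)) := by
        rintro x ⟨hxD, hx1, hx2⟩
        simp only [Finset.coe_filter, Finset.mem_Ico, Set.mem_setOf_eq]
        refine ⟨⟨hx1, hx2⟩, ?_⟩
        rw [hD] at hxD
        obtain ⟨y, hy, z, hz, hy0, hz0, hxe⟩ := hxD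
        have hym := hmin y hy hy0
        have hzm := hmin z hz hz0
        have h1 : k ∣ y := key y hy hy0 (by omega)
        have h2 : k ∣ z := key z hz hz0 (by omega)
        rw [hxe]; exact Nat.dvd_add h1 h2
      have hcard : ((Finset.Ico c (c + m)).filter (fun x => k ∣ x)).card = m / k := by
        have e1 : Finset.Ico c (c + m) = Finset.Ioc (c - 1) (c - 1 + m) := by
          ext x
          simp only [Finset.mem_Ico, Finset.mem_Ioc]
          omega
        have hdisj : Disjoint ((Finset.Ioc 0 (c - 1)).filter (fun x => k ∣ x))
            ((Finset.Ioc (c - 1) (c - 1 + m)).filter (fun x => k ∣ x)) := by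
          apply Finset.disjoint_filter_filter
          rw [Finset.disjoint_left]
          intro a ha hb
          simp only [Finset.mem_Ioc] at ha hb
          omega
        have e3 : Finset.Ioc 0 (c - 1) ∪ Finset.Ioc (c - 1) (c - 1 + m) =
            Finset.Ioc 0 (c - 1 + m) := Finset.Ioc_union_Ioc_eq_Ioc (by omega) (by omega)
        have h4 : ((Finset.Ioc 0 (c - 1)).filter (fun x => k ∣ x)).card +
            ((Finset.Ioc (c - 1) (c - 1 + m)).filter (fun x => k ∣ x)).card =
            ((Finset.Ioc 0 (c - 1 + m)).filter (fun x => k ∣ x)).card := by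
          rw [← Finset.card_union_of_disjoint hdisj, ← Finset.filter_union, e3]
        have h5 := Nat.Ioc_filter_dvd_card_eq_div (c - 1 + m) k
        have h6 := Nat.Ioc_filter_dvd_card_eq_div (c - 1) k
        have h7 : (c - 1 + m) / k = (c - 1) / k + m / k := by
          obtain ⟨t, rfl⟩ := hkm
          rw [Nat.add_mul_div_left _ _ hk0, Nat.mul_div_cancel_left _ hk0]
        rw [e1]
        omega
      calc (D ∩ Set.Ico c (c + m)).ncard
          ≤ (↑((Finset.Ico c (c + m)).filter (fun x => k ∣ x)) : Set ℕ).ncard :=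
            Set.ncard_le_ncard hsub (Finset.finite_toSet _)
        _ = m / k := by rw [Set.ncard_coe_finset, hcard]
  have hPfin : P.Finite := by
    apply Set.Finite.subset (Set.finite_Iio (c + m))
    intro x hx
    simp only [Set.mem_Iio]
    by_contra h
    push_neg at h
    have hxD : x ∈ D := by
      rw [hD]
      exact ⟨m, hmS.1, x - m, hge _ (by omega), hmS.2, by omega, by omega⟩
    rw [hP] at hx
    exact hx.2 hxD
  have hP2 : m - m / k ≤ P.ncard := by
    have hfin1 : (P ∩ Set.Ico c (c + m)).Finite :=
      Set.Finite.subset (Set.finite_Ico _ _) Set.inter_subset_right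
    have hfin2 : (D ∩ Set.Ico c (c + m)).Finite :=
      Set.Finite.subset (Set.finite_Ico _ _) Set.inter_subset_right
    have hsub2 : Set.Ico c (c + m) ⊆ (P ∩ Set.Ico c (c + m)) ∪ (D ∩ Set.Ico c (c + m)) := by
      intro x hx
      obtain ⟨hx1, hx2⟩ := hx
      have hxS : x ∈ S := hge x hx1
      by_cases hxD : x ∈ D
      · right; exact ⟨hxD, hx1, hx2⟩
      · left
        refine ⟨?_, hx1, hx2⟩
        rw [hP]
        exact ⟨⟨hxS, by omega⟩, hxD⟩
    have h8 : (Set.Ico c (c + m)).ncard = m := by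
      rw [show Set.Ico c (c + m) = ↑(Finset.Ico c (c + m)) from (Finset.coe_Ico _ _).symm,
        Set.ncard_coe_finset, Nat.card_Ico]
      omega
    have h9 : (Set.Ico c (c + m)).ncard ≤
        (P ∩ Set.Ico c (c + m)).ncard + (D ∩ Set.Ico c (c + m)).ncard :=
      le_trans (Set.ncard_le_ncard hsub2 (hfin1.union hfin2)) (Set.ncard_union_le _ _)
    have h10 : (P ∩ Set.Ico c (c + m)).ncard ≤ P.ncard :=
      Set.ncard_le_ncard Set.inter_subset_left hPfin
    omega
  have hdiv1 : m / k ≤ m / 2 := Nat.div_le_div_left hk (by omega)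
  have hdiv2 : m / 2 * 2 ≤ m := Nat.div_mul_le_self m 2
  exact ⟨hDcount, hP2, by omega, hSammartano (by omega)⟩
end
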